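/- arXiv:1211.7216 — 5 statements merged into one kernel-verified Lean document; each statement's English description precedes it below -/
import Mathlib

section
/- Let T be a locally finite rooted tree with all forward degrees at least 2 and let d be any ultrametric on ∂T whose closed balls are exactly the sets ∂T_x of ends of branches T_x, x ∈ T. Then d is induced by an ultrametric element: setting φ(x) = diam(∂T_x) with respect to d, φ satisfies φ(x⁻) > φ(x) for all x ≠ o, φ tends to 0 along every ray, and d = d_φ where d_φ(ξ,η) = φ(ξ∧η) for ξ ≠ η. -/
open Filter

variable {V : Type*}

/-- The ends of a rooted tree, realised as geodesic rays from the root. -/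
def Ends (root : V) (par : V → V) : Type _ :=
  {ξ : ℕ → V // ξ 0 = root ∧ ∀ n, par (ξ (n + 1)) = ξ n ∧ ξ (n + 1) ≠ ξ n}

/-- The confluent `ξ ∧ η` of two ends with respect to the root. -/
noncomputable def confl {root : V} {par : V → V} (ξ η : Ends root par) : V :=
  ξ.1 (sSup {n | ξ.1 n = η.1 n})

/-- `∂T_x` : the set of ends passing through the vertex `x`, i.e. the ends of the
branch `T_x`. -/
def branchEnds (root : V) (par : V → V) (x : V) : Set (Ends root par) :=
  {ξ | ∃ n, ξ.1 n = x}

/-- Diameter of a set of ends with respect to a distance function `d`. -/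
noncomputable def diamOn {E : Type*} (d : E → E → ℝ) (s : Set E) : ℝ :=
  sSup (Set.image2 d s s)

section aux
variable (root : V) (par : V → V) (depth : V → ℕ)

lemma end_depth (hroot : par root = root) (hdepth0 : depth root = 0)
    (hdepth : ∀ x, x ≠ root → depth (par x) + 1 = depth x)
    (ξ : Ends root par) : ∀ n, depth (ξ.1 n) = n := by
  intro n
  induction n with
  | zero => rw [ξ.2.1, hdepth0]
  | succ n ih =>
    have hne : ξ.1 (n+1) ≠ root := by
      intro h
      have h2 := (ξ.2.2 n).1
      rw [h, hroot] at h2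
      exact (ξ.2.2 n).2 (h.trans h2)
    have := hdepth _ hne
    rw [(ξ.2.2 n).1] at this
    omega

lemma end_anc (ξ : Ends root par) : ∀ k n, ξ.1 n = par^[k] (ξ.1 (n + k)) := by
  intro k
  induction k with
  | zero => intro n; simp
  | succ k ih =>
    intro n
    rw [Function.iterate_succ_apply', show n + (k+1) = (n+1) + k by omega, ← ih (n+1),
      (ξ.2.2 n).1]

lemma end_agree (ξ η : Ends root par) {n : ℕ} (h : ξ.1 n = η.1 n) :
    ∀ k ≤ n, ξ.1 k = η.1 k := by
  intro k hk
  have h1 := end_anc root par ξ (n - k) k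
  have h2 := end_anc root par η (n - k) k
  rw [show k + (n - k) = n by omega] at h1 h2
  rw [h1, h2, h]

lemma mem_branch_iff (hroot : par root = root) (hdepth0 : depth root = 0)
    (hdepth : ∀ x, x ≠ root → depth (par x) + 1 = depth x)
    (ξ : Ends root par) (x : V) :
    ξ ∈ branchEnds root par x ↔ ξ.1 (depth x) = x := by
  constructor
  · rintro ⟨n, hn⟩
    have := end_depth root par depth hroot hdepth0 hdepth ξ n
    rw [hn] at this
    rwa [this]
  · intro h; exact ⟨_, h⟩

lemma branch_subset (hroot : par root = root) (hdepth0 : depth root = 0)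
    (hdepth : ∀ x, x ≠ root → depth (par x) + 1 = depth x)
    {x : V} (hx : x ≠ root) :
    branchEnds root par x ⊆ branchEnds root par (par x) := by
  rintro ξ ⟨n, hn⟩
  have hd := end_depth root par depth hroot hdepth0 hdepth ξ n
  rw [hn] at hd
  have hdx := hdepth x hx
  refine ⟨depth (par x), ?_⟩
  have : n = depth (par x) + 1 := by omega
  subst this
  rw [← (ξ.2.2 (depth (par x))).1, hn]

lemma depth_iterate (hroot : par root = root) (hdepth0 : depth root = 0)
    (hdepth : ∀ x, x ≠ root → depth (par x) + 1 = depth x) (x : V) :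
    ∀ j, j ≤ depth x → depth (par^[j] x) = depth x - j := by
  intro j
  induction j with
  | zero => simp
  | succ j ih =>
    intro hj
    have h1 : depth (par^[j] x) = depth x - j := ih (by omega)
    have hne : par^[j] x ≠ root := by
      intro h; rw [h, hdepth0] at h1; omega
    have := hdepth _ hne
    rw [Function.iterate_succ_apply']
    omega

lemma depth_eq_zero (hdepth : ∀ x, x ≠ root → depth (par x) + 1 = depth x)
    {x : V} (hx : depth x = 0) : x = root := by
  by_contra h
  have := hdepth x h
  omega

/-- There is an end through every vertex. -/
lemma branch_nonempty (hroot : par root = root) (hdepth0 : depth root = 0)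
    (hdepth : ∀ x, x ≠ root → depth (par x) + 1 = depth x)
    (hdeg : ∀ x : V, ∃ y z : V, y ≠ z ∧ par y = x ∧ par z = x ∧ y ≠ x ∧ z ≠ x)
    (x : V) : (branchEnds root par x).Nonempty := by
  have hchild : ∀ v : V, ∃ w, par w = v ∧ w ≠ v := by
    intro v; obtain ⟨y, z, _, hy, _, hy2, _⟩ := hdeg v; exact ⟨y, hy, hy2⟩
  choose child hc1 hc2 using hchild
  set f : ℕ → V := fun n => child^[n] x with hf
  have hf0 : f 0 = x := rfl
  have hfs : ∀ n, f (n+1) = child (f n) := fun n => Function.iterate_succ_apply' child n x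
  set g : ℕ → V := fun n => if n < depth x then par^[depth x - n] x else f (n - depth x) with hg
  have hgd : ∀ n, n ≥ depth x → g n = f (n - depth x) := by
    intro n hn; simp only [hg]; rw [if_neg (by omega)]
  have hgu : ∀ n, n < depth x → g n = par^[depth x - n] x := by
    intro n hn; simp only [hg]; rw [if_pos hn]
  have hg0 : g 0 = root := by
    rcases Nat.eq_zero_or_pos (depth x) with h0 | h0
    · rw [hgd 0 (by omega), h0]
      rw [hf0]
      exact depth_eq_zero root par depth hdepth h0
    · rw [hgu 0 h0]
      have h1 := depth_iterate root par depth hroot hdepth0 hdepth x (depth x) le_rfl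
      simp only [Nat.sub_zero] at *
      exact depth_eq_zero root par depth hdepth (by omega)
  have hgstep : ∀ n, par (g (n+1)) = g n ∧ g (n+1) ≠ g n := by
    intro n
    rcases lt_or_ge (n+1) (depth x) with h | h
    · rw [hgu (n+1) h, hgu n (by omega)]
      constructor
      · rw [← Function.iterate_succ_apply' par]
        congr 1; omega
      · intro heq
        have h1 := depth_iterate root par depth hroot hdepth0 hdepth x (depth x - (n+1)) (by omega)
        have h2 := depth_iterate root par depth hroot hdepth0 hdepth x (depth x - n) (by omega)
        rw [heq] at h1; omega
    · rcases eq_or_lt_of_le h with h | h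
      · have e1 : g (n+1) = x := by
          rw [hgd (n+1) (by omega), show n+1-depth x = 0 from by omega]; exact hf0
        have e2 : g n = par x := by
          rw [hgu n (by omega), show depth x - n = 1 from by omega]
          exact Function.iterate_one par ▸ rfl
        have hxr : x ≠ root := by
          intro hh; rw [hh, hdepth0] at h; omega
        have hdx := hdepth x hxr
        rw [e1, e2]
        exact ⟨rfl, fun heq => by rw [← heq] at hdx; omega⟩
      · rw [hgd (n+1) (by omega), hgd n (by omega),
          show n + 1 - depth x = (n - depth x) + 1 from by omega, hfs]
        exact ⟨hc1 _, hc2 _⟩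
  refine ⟨⟨g, hg0, hgstep⟩, depth x, ?_⟩
  rcases Nat.eq_zero_or_pos (depth x) with h0 | h0
  · rw [show (⟨g, hg0, hgstep⟩ : Ends root par).1 = g from rfl, hgd _ (by omega), h0]
    exact hf0
  · rw [show (⟨g, hg0, hgstep⟩ : Ends root par).1 = g from rfl, hgd _ le_rfl]
    simp [hf0]

end aux

/-- Let `T` be a locally finite rooted tree with all forward degrees at least `2` and
let `d` be any ultrametric on `∂T` whose closed balls are exactly the sets `∂T_x`.
Then `d` is induced by an ultrametric element: setting `φ(x) = diam(∂T_x)`, `φ`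
satisfies `φ(x⁻) > φ(x)` for all `x ≠ o`, `φ` tends to `0` along every ray, and
`d = d_φ`, i.e. `d(ξ,η) = φ(ξ∧η)` for `ξ ≠ η`. -/
theorem stmt_5 (root : V) (par : V → V) (depth : V → ℕ)
    (hroot : par root = root) (hdepth0 : depth root = 0)
    (hdepth : ∀ x, x ≠ root → depth (par x) + 1 = depth x)
    (hlocfin : ∀ x : V, {y | par y = x ∧ y ≠ x}.Finite)
    (hdeg : ∀ x : V, ∃ y z : V, y ≠ z ∧ par y = x ∧ par z = x ∧ y ≠ x ∧ z ≠ x)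
    (d : Ends root par → Ends root par → ℝ)
    (hd0 : ∀ ξ η, d ξ η = 0 ↔ ξ = η)
    (hdsymm : ∀ ξ η, d ξ η = d η ξ)
    (hdnn : ∀ ξ η, 0 ≤ d ξ η)
    (hdu : ∀ ξ η ζ, d ξ ζ ≤ max (d ξ η) (d η ζ))
    (hball₁ : ∀ (ξ : Ends root par) (r : ℝ), 0 < r →
      ∃ x : V, {η | d η ξ ≤ r} = branchEnds root par x)
    (hball₂ : ∀ x : V, ∃ (ξ : Ends root par) (r : ℝ), 0 < r ∧
      branchEnds root par x = {η | d η ξ ≤ r}) :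
    (∀ x, x ≠ root →
      diamOn d (branchEnds root par x) < diamOn d (branchEnds root par (par x))) ∧
    (∀ ξ : Ends root par,
      Tendsto (fun n => diamOn d (branchEnds root par (ξ.1 n))) atTop (nhds 0)) ∧
    (∀ ξ η : Ends root par, ξ ≠ η → d ξ η = diamOn d (branchEnds root par (confl ξ η))) := by
  have hED := end_depth root par depth hroot hdepth0 hdepth
  have hMB := mem_branch_iff root par depth hroot hdepth0 hdepth
  have hBS : ∀ {x : V}, x ≠ root →
      branchEnds root par x ⊆ branchEnds root par (par x) :=
    fun hx => branch_subset root par depth hroot hdepth0 hdepth hx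
  have hBN := branch_nonempty root par depth hroot hdepth0 hdepth hdeg
  -- boundedness of each branch
  have hbound : ∀ x : V, ∃ r : ℝ, 0 < r ∧ ∀ ζ ∈ branchEnds root par x,
      ∀ ζ' ∈ branchEnds root par x, d ζ ζ' ≤ r := by
    intro x
    obtain ⟨ξ₀, r, hr, hEq⟩ := hball₂ x
    refine ⟨r, hr, fun ζ hζ ζ' hζ' => (hdu ζ ξ₀ ζ').trans (max_le ?_ ?_)⟩
    · rw [hEq] at hζ; exact hζ
    · rw [hEq] at hζ'; rw [hdsymm]; exact hζ'
  have hbdd : ∀ x : V, BddAbove (Set.image2 d (branchEnds root par x) (branchEnds root par x)) := by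
    intro x
    obtain ⟨r, _, hr⟩ := hbound x
    exact ⟨r, by rintro v ⟨a, ha, b, hb, rfl⟩; exact hr a ha b hb⟩
  have hle_diam : ∀ (x : V), ∀ ζ ∈ branchEnds root par x, ∀ ζ' ∈ branchEnds root par x,
      d ζ ζ' ≤ diamOn d (branchEnds root par x) :=
    fun x ζ hζ ζ' hζ' => le_csSup (hbdd x) (Set.mem_image2_of_mem hζ hζ')
  have hdiam_le : ∀ (x : V) (r : ℝ), (∀ ζ ∈ branchEnds root par x,
      ∀ ζ' ∈ branchEnds root par x, d ζ ζ' ≤ r) → diamOn d (branchEnds root par x) ≤ r := by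
    intro x r h
    refine csSup_le ((hBN x).image2 (hBN x)) ?_
    rintro v ⟨a, ha, b, hb, rfl⟩
    exact h a ha b hb
  have hdiam_nonneg : ∀ x : V, 0 ≤ diamOn d (branchEnds root par x) := by
    intro x
    obtain ⟨ζ, hζ⟩ := hBN x
    have := hle_diam x ζ hζ ζ hζ
    rw [(hd0 ζ ζ).2 rfl] at this
    exact this
  -- the key ultrametric lemma
  have hkey : ∀ (x : V), x ≠ root → ∀ ξ ∈ branchEnds root par x,
      ∀ η ∈ branchEnds root par (par x), η ∉ branchEnds root par x →
      d ξ η = diamOn d (branchEnds root par (par x)) := by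
    intro x hx ξ hξ η hη hηx
    have hξη : ξ ≠ η := fun h => hηx (h ▸ hξ)
    have hr : 0 < d ξ η :=
      lt_of_le_of_ne (hdnn ξ η) (fun h => hξη ((hd0 ξ η).1 h.symm))
    obtain ⟨y, hy⟩ := hball₁ ξ (d ξ η) hr
    have hξy : ξ ∈ branchEnds root par y := by
      rw [← hy]; show d ξ ξ ≤ d ξ η; rw [(hd0 ξ ξ).2 rfl]; exact hr.le
    have hηy : η ∈ branchEnds root par y := by
      rw [← hy]; show d η ξ ≤ d ξ η; rw [hdsymm]
    have hξym := (hMB ξ y).1 hξy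
    have hηym := (hMB η y).1 hηy
    have hdpx : depth (par x) + 1 = depth x := hdepth x hx
    have hmlt : depth y < depth x := by
      by_contra h
      push_neg at h
      have := end_agree root par ξ η (hξym.trans hηym.symm) (depth x) h
      exact hηx ((hMB η x).2 (this ▸ (hMB ξ x).1 hξ))
    have hξpx : ξ ∈ branchEnds root par (par x) := hBS hx hξ
    have hsub : ∀ ζ ∈ branchEnds root par (par x), d ζ ξ ≤ d ξ η := by
      intro ζ hζ
      have hζp := (hMB ζ (par x)).1 hζ
      have hξp := (hMB ξ (par x)).1 hξpx
      have hagr := end_agree root par ζ ξ (hζp.trans hξp.symm) (depth y) (by omega)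
      have hζy : ζ ∈ branchEnds root par y := (hMB ζ y).2 (hagr.trans hξym)
      rw [← hy] at hζy
      exact hζy
    have h1 : diamOn d (branchEnds root par (par x)) ≤ d ξ η :=
      hdiam_le _ _ (fun ζ hζ ζ' hζ' => (hdu ζ ξ ζ').trans
        (max_le (hsub ζ hζ) (by rw [hdsymm]; exact hsub ζ' hζ')))
    have h2 : d ξ η ≤ diamOn d (branchEnds root par (par x)) :=
      hle_diam (par x) ξ hξpx η hη
    linarith
  refine ⟨?_, ?_, ?_⟩
  · -- strict decrease
    intro x hx
    obtain ⟨y, z, hyz, hpy, hpz, hy, hz⟩ := hdeg (par x)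
    obtain ⟨w, hpw, hwx, hwp⟩ : ∃ w, par w = par x ∧ w ≠ x ∧ w ≠ par x := by
      by_cases hyx : y = x
      · exact ⟨z, hpz, fun h => hyz (hyx.trans h.symm), hz⟩
      · exact ⟨y, hpy, hyx, hy⟩
    have hwr : w ≠ root := by
      intro h
      rw [h, hroot] at hpw
      exact hwp (h.trans hpw)
    have hdw : depth w = depth x := by
      have h1 := hdepth w hwr
      have h2 := hdepth x hx
      rw [hpw] at h1
      omega
    obtain ⟨η, hη⟩ := hBN w
    have hηpx : η ∈ branchEnds root par (par x) := by
      have := hBS hwr hη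
      rwa [hpw] at this
    have hηx : η ∉ branchEnds root par x := by
      intro h
      have h1 := (hMB η w).1 hη
      have h2 := (hMB η x).1 h
      rw [hdw] at h1
      exact hwx (h1.symm.trans h2)
    obtain ⟨ξ₀, r, hr, hEq⟩ := hball₂ x
    have hξ₀ : ξ₀ ∈ branchEnds root par x := by
      rw [hEq]; show d ξ₀ ξ₀ ≤ r; rw [(hd0 ξ₀ ξ₀).2 rfl]; exact hr.le
    have hkey' := hkey x hx ξ₀ hξ₀ η hηpx hηx
    have hηr : r < d ξ₀ η := by
      by_contra h
      push_neg at h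
      exact hηx (by rw [hEq]; show d η ξ₀ ≤ r; rw [hdsymm]; exact h)
    have hdx_le : diamOn d (branchEnds root par x) ≤ r := by
      refine hdiam_le x r (fun ζ hζ ζ' hζ' => (hdu ζ ξ₀ ζ').trans (max_le ?_ ?_))
      · rw [hEq] at hζ; exact hζ
      · rw [hEq] at hζ'; rw [hdsymm]; exact hζ'
    linarith
  · -- convergence to zero along rays
    intro ξ
    rw [Metric.tendsto_atTop]
    intro ε hε
    obtain ⟨y, hy⟩ := hball₁ ξ (ε/2) (by linarith)
    have hξy : ξ ∈ branchEnds root par y := by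
      rw [← hy]; show d ξ ξ ≤ ε/2; rw [(hd0 ξ ξ).2 rfl]; linarith
    have hξym := (hMB ξ y).1 hξy
    refine ⟨depth y, fun n hn => ?_⟩
    have hsub : ∀ ζ ∈ branchEnds root par (ξ.1 n), d ζ ξ ≤ ε/2 := by
      intro ζ hζ
      have hζn := (hMB ζ (ξ.1 n)).1 hζ
      rw [hED ξ n] at hζn
      have hagr := end_agree root par ζ ξ hζn (depth y) hn
      have hζy : ζ ∈ branchEnds root par y := (hMB ζ y).2 (hagr.trans hξym)
      rw [← hy] at hζy
      exact hζy
    have hle : diamOn d (branchEnds root par (ξ.1 n)) ≤ ε/2 :=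
      hdiam_le _ _ (fun ζ hζ ζ' hζ' => (hdu ζ ξ ζ').trans
        (max_le (hsub ζ hζ) (by rw [hdsymm]; exact hsub ζ' hζ')))
    rw [Real.dist_eq, sub_zero, abs_of_nonneg (hdiam_nonneg _)]
    linarith
  · -- d is induced by the diameters via confluents
    intro ξ η hne
    have hS0 : (0 : ℕ) ∈ {n | ξ.1 n = η.1 n} := by
      show ξ.1 0 = η.1 0
      rw [ξ.2.1, η.2.1]
    have hSb : BddAbove {n | ξ.1 n = η.1 n} := by
      have hex : ∃ m, ξ.1 m ≠ η.1 m := by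
        by_contra h
        push_neg at h
        exact hne (Subtype.ext (funext h))
      obtain ⟨m, hm⟩ := hex
      refine ⟨m, fun n hn => ?_⟩
      by_contra h
      push_neg at h
      exact hm (end_agree root par ξ η hn m h.le)
    set N := sSup {n | ξ.1 n = η.1 n} with hNdef
    have hN : ξ.1 N = η.1 N := Nat.sSup_mem ⟨0, hS0⟩ hSb
    have hN1 : ξ.1 (N+1) ≠ η.1 (N+1) := by
      intro h
      have := le_csSup hSb (show N + 1 ∈ {n | ξ.1 n = η.1 n} from h)
      omega
    set x := ξ.1 (N+1) with hxdef
    have hxr : x ≠ root := by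
      intro h
      have := hED ξ (N+1)
      rw [← hxdef, h, hdepth0] at this
      omega
    have hpx : par x = ξ.1 N := (ξ.2.2 N).1
    have hξx : ξ ∈ branchEnds root par x := ⟨N+1, rfl⟩
    have hηpx : η ∈ branchEnds root par (par x) := by
      rw [hpx, hN]; exact ⟨N, rfl⟩
    have hηx : η ∉ branchEnds root par x := by
      intro h
      have h1 := (hMB η x).1 h
      have h2 : depth x = N+1 := by rw [hxdef]; exact hED ξ (N+1)
      rw [h2] at h1
      exact hN1 (h1.symm ▸ rfl)
    have hk := hkey x hxr ξ hξx η hηpx hηx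
    have hconfl : confl ξ η = par x := by
      rw [confl, ← hNdef, hpx]
    rw [hconfl]
    exact hk
end

section
/- A transient nearest neighbour random walk on an infinite locally finite tree T converges almost surely to a random end: there is a ∂T-valued random variable Z_∞ such that for every starting vertex x, Prob_x[Z_n → Z_∞ in the end topology of T ∪ ∂T] = 1. -/
/-
A transient walk visits each vertex only finitely often, and local finiteness leaves only finitely
many vertices of bounded depth, so `depth (Z n) → ∞`. Because the walk moves along edges, once its
depth stays above `m` its ancestor at level `m` no longer changes; these eventual ancestors form a
geodesic ray from the root, i.e. an end, to which `Z n` converges.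
-/

open Filter MeasureTheory

variable {V : Type*}

/-- Neighbourhood relation of the tree given by the predecessor map `par`. -/
def adjT (par : V → V) (x y : V) : Prop := x ≠ y ∧ (par x = y ∨ par y = x)

lemma countable_of_finite_sublevels {f : V → ℕ} (hf : ∀ m, {x | f x ≤ m}.Finite) :
    Countable V := by
  have hcover : ⋃ m, {x | f x ≤ m} = Set.univ :=
    Set.eq_univ_of_forall fun x => Set.mem_iUnion.2 ⟨f x, show f x ≤ f x from le_rfl⟩
  exact Set.countable_univ_iff.1 (hcover ▸ Set.countable_iUnion fun m => (hf m).countable)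

lemma tendsto_comp_atTop_of_finite_sublevels {f : V → ℕ} {z : ℕ → V}
    (hf : ∀ m, {x | f x ≤ m}.Finite) (hz : ∀ y, {n | z n = y}.Finite) :
    Tendsto (f ∘ z) atTop atTop := by
  refine tendsto_atTop.2 fun m => ?_
  rw [← Nat.cofinite_eq_atTop, eventually_cofinite]
  refine ((hf m).preimage' fun y _ => hz y).subset fun n hn => ?_
  exact le_of_lt (not_le.1 hn)

namespace RootedTree

structure IsDepth (root : V) (par : V → V) (depth : V → ℕ) : Prop where
  root_eq_zero : depth root = 0
  par_add_one : ∀ x, x ≠ root → depth (par x) + 1 = depth x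

-- Meaningful only for `m ≤ depth x`; otherwise the truncated subtraction makes it `x`.
def ancestor (par : V → V) (depth : V → ℕ) (m : ℕ) (x : V) : V := par^[depth x - m] x

def ConvergesToEnd {root : V} {par : V → V} (z : ℕ → V) (ξ : Ends root par) : Prop :=
  ∀ m, ∀ᶠ n in atTop, ∃ k, par^[k] (z n) = ξ.1 m

variable {root : V} {par : V → V} {depth : V → ℕ}

lemma par_ancestor_succ {m : ℕ} {x : V} (hm : m < depth x) :
    par (ancestor par depth (m + 1) x) = ancestor par depth m x := by
  rw [ancestor, ancestor, ← Function.iterate_succ_apply' par]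
  congr 1
  omega

namespace IsDepth

variable (hd : IsDepth root par depth)
include hd

lemma ne_root_of_pos {x : V} (hx : 0 < depth x) : x ≠ root := by
  rintro rfl
  exact hx.ne' hd.root_eq_zero

lemma eq_root_of_depth_eq_zero {x : V} (hx : depth x = 0) : x = root := by
  by_contra hne
  have := hd.par_add_one x hne
  omega

lemma depth_iterate {x : V} {k : ℕ} (hk : k ≤ depth x) :
    depth (par^[k] x) = depth x - k := by
  induction k with
  | zero => rfl
  | succ k ih =>
    have hdk := ih (by omega)
    have hpar := hd.par_add_one (par^[k] x) (hd.ne_root_of_pos (by omega))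
    rw [Function.iterate_succ_apply']
    omega

lemma depth_ancestor {m : ℕ} {x : V} (hm : m ≤ depth x) :
    depth (ancestor par depth m x) = m := by
  rw [ancestor, hd.depth_iterate (Nat.sub_le _ _)]
  omega

lemma ancestor_zero (x : V) : ancestor par depth 0 x = root :=
  hd.eq_root_of_depth_eq_zero (hd.depth_ancestor (Nat.zero_le _))

lemma ancestor_par {m : ℕ} {x : V} (hm : m < depth x) :
    ancestor par depth m (par x) = ancestor par depth m x := by
  have hpar := hd.par_add_one x (hd.ne_root_of_pos (by omega))
  rw [ancestor, ancestor, ← Function.iterate_succ_apply]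
  congr 1
  omega

lemma ancestor_eq_of_adjT {m : ℕ} {a b : V} (hab : adjT par a b)
    (ha : m < depth a) (hb : m < depth b) :
    ancestor par depth m a = ancestor par depth m b := by
  rcases hab.2 with rfl | rfl
  · exact (hd.ancestor_par ha).symm
  · exact hd.ancestor_par hb

lemma finite_depth_le (hlocfin : ∀ x : V, {y | par y = x ∧ y ≠ x}.Finite) (m : ℕ) :
    {x | depth x ≤ m}.Finite := by
  induction m with
  | zero =>
    refine (Set.finite_singleton root).subset fun x hx => ?_
    exact hd.eq_root_of_depth_eq_zero (Nat.le_zero.1 hx)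
  | succ m ih =>
    refine (ih.union (ih.biUnion fun y _ => hlocfin y)).subset fun x hx => ?_
    have hx : depth x ≤ m + 1 := hx
    rcases Nat.lt_or_ge (depth x) (m + 1) with hlt | hge
    · exact Or.inl (Nat.lt_succ_iff.1 hlt)
    · have hpar := hd.par_add_one x (hd.ne_root_of_pos (by omega))
      refine Or.inr (Set.mem_biUnion (x := par x) (show depth (par x) ≤ m by omega) ?_)
      refine ⟨rfl, fun heq => ?_⟩
      rw [← heq] at hpar
      omega

lemma exists_convergesToEnd {z : ℕ → V} (hadj : ∀ n, adjT par (z n) (z (n + 1)))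
    (hesc : Tendsto (depth ∘ z) atTop atTop) :
    ∃ ξ : Ends root par, ConvergesToEnd z ξ := by
  have hconst : ∀ m, EventuallyConst (fun n => ancestor par depth m (z n)) atTop := by
    intro m
    obtain ⟨N, hN⟩ := eventually_atTop.1 (hesc.eventually_gt_atTop m)
    exact eventuallyConst_atTop_nat.2 ⟨N, fun n hn =>
      (hd.ancestor_eq_of_adjT (hadj n) (hN n hn) (hN (n + 1) (by omega))).symm⟩
  have : Nonempty V := ⟨z 0⟩
  choose ξ hξ using fun m => (hconst m).eventuallyEq_const
  have hlevel : ∀ m, ∃ n, ancestor par depth m (z n) = ξ m ∧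
      ancestor par depth (m + 1) (z n) = ξ (m + 1) ∧ m + 1 < depth (z n) := fun m =>
    ((hξ m).and ((hξ (m + 1)).and (hesc.eventually_gt_atTop (m + 1)))).exists
  refine ⟨⟨ξ, ?_, fun m => ?_⟩, fun m => (hξ m).mono fun n h => ⟨_, h⟩⟩
  · obtain ⟨n, h0, -⟩ := hlevel 0
    rw [← h0, hd.ancestor_zero]
  · obtain ⟨n, hm, hm1, hdepth⟩ := hlevel m
    refine ⟨hm ▸ hm1 ▸ par_ancestor_succ (by omega), fun heq => ?_⟩
    have := hd.depth_ancestor (m := m + 1) hdepth.le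
    rw [hm1, heq, ← hm, hd.depth_ancestor (by omega)] at this
    omega

end IsDepth

end RootedTree

section MarkovChain

variable {Ω : Type*} [MeasurableSpace Ω]

def HasTransitionProbs (p : V → V → ENNReal) (μ : Measure Ω) (Z : ℕ → Ω → V) : Prop :=
  ∀ (n : ℕ) (w : ℕ → V),
    μ {ω | ∀ k ≤ n + 1, Z k ω = w k} = μ {ω | ∀ k ≤ n, Z k ω = w k} * p (w n) (w (n + 1))

variable [Countable V] {p : V → V → ENNReal} {μ : Measure Ω} {Z : ℕ → Ω → V}

open Fin.NatCast in
lemma HasTransitionProbs.ae_not_step (hM : HasTransitionProbs p μ Z) {u v : V}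
    (huv : p u v = 0) (n : ℕ) : ∀ᵐ ω ∂μ, ¬(Z n ω = u ∧ Z (n + 1) ω = v) := by
  have hcylinders : ∀ g : Fin (n + 2) → V, ∀ᵐ ω ∂μ,
      (∀ k ≤ n + 1, Z k ω = g (k : Fin (n + 2))) → ¬(Z n ω = u ∧ Z (n + 1) ω = v) := by
    intro g
    set w : ℕ → V := fun k => g (k : Fin (n + 2))
    by_cases hg : w n = u ∧ w (n + 1) = v
    · have hnull : μ {ω | ∀ k ≤ n + 1, Z k ω = w k} = 0 := by
        rw [hM n w]
        simp only [hg, huv, mul_zero]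
      exact (measure_eq_zero_iff_ae_notMem.1 hnull).mono fun ω hω hcyl => absurd hcyl hω
    · refine Eventually.of_forall fun ω hcyl ⟨hu, hv⟩ => hg ⟨?_, ?_⟩
      · rw [← hu, hcyl n (by omega)]
      · rw [← hv, hcyl (n + 1) le_rfl]
  filter_upwards [ae_all_iff.2 hcylinders] with ω hω
  refine hω (fun i => Z i ω) fun k hk => ?_
  rw [Fin.val_cast_of_lt (by omega)]

lemma HasTransitionProbs.ae_forall_pos (hM : HasTransitionProbs p μ Z) :
    ∀ᵐ ω ∂μ, ∀ n, 0 < p (Z n ω) (Z (n + 1) ω) := by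
  have hstep : ∀ (n : ℕ) (q : V × V), ∀ᵐ ω ∂μ,
      (Z n ω = q.1 ∧ Z (n + 1) ω = q.2) → 0 < p q.1 q.2 := by
    intro n q
    by_cases hq : p q.1 q.2 = 0
    · exact (hM.ae_not_step hq n).mono fun ω h hq' => absurd hq' h
    · exact Eventually.of_forall fun _ _ => pos_iff_ne_zero.2 hq
  filter_upwards [ae_all_iff.2 fun n => ae_all_iff.2 (hstep n)] with ω hω n
  exact hω n (Z n ω, Z (n + 1) ω) ⟨rfl, rfl⟩

end MarkovChain

open RootedTree in
theorem stmt_10_general (root : V) (par : V → V) (depth : V → ℕ)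
    (hdepth0 : depth root = 0)
    (hdepth : ∀ x, x ≠ root → depth (par x) + 1 = depth x)
    (hlocfin : ∀ x : V, {y | par y = x ∧ y ≠ x}.Finite)
    (p : V → V → ENNReal)
    (hnn : ∀ x y : V, 0 < p x y ↔ adjT par x y)
    {Ω : Type*} [MeasurableSpace Ω] (P : V → Measure Ω)
    [∀ x, IsProbabilityMeasure (P x)]
    (Z : ℕ → Ω → V)
    (hMarkov : ∀ (x : V) (n : ℕ) (w : ℕ → V),
      P x {ω | ∀ k ≤ n + 1, Z k ω = w k}
        = P x {ω | ∀ k ≤ n, Z k ω = w k} * p (w n) (w (n + 1)))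
    (htrans : ∀ x y : V, ∀ᵐ ω ∂(P x), {n : ℕ | Z n ω = y}.Finite) :
    ∃ Zinf : Ω → Ends root par, ∀ x : V, ∀ᵐ ω ∂(P x),
      ∀ m : ℕ, ∀ᶠ n in atTop, ∃ k : ℕ, par^[k] (Z n ω) = (Zinf ω).1 m := by
  have hd : IsDepth root par depth := ⟨hdepth0, hdepth⟩
  have hball := hd.finite_depth_le hlocfin
  have : Countable V := countable_of_finite_sublevels hball
  have hconv : ∀ x, ∀ᵐ ω ∂(P x), ∃ ξ : Ends root par, ConvergesToEnd (Z · ω) ξ := by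
    intro x
    filter_upwards [HasTransitionProbs.ae_forall_pos (hMarkov x), ae_all_iff.2 (htrans x)]
      with ω hpos hfin
    exact hd.exists_convergesToEnd (fun n => (hnn _ _).1 (hpos n))
      (tendsto_comp_atTop_of_finite_sublevels hball hfin)
  -- `Ends root par` is nonempty because the walk started at `root` converges to an end a.s.
  obtain ⟨-, ξ₀, -⟩ := (hconv root).exists
  have : Nonempty (Ends root par) := ⟨ξ₀⟩
  refine ⟨fun ω => Classical.epsilon (ConvergesToEnd (Z · ω)), fun x => ?_⟩
  filter_upwards [hconv x] with ω hω
  exact Classical.epsilon_spec hω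

/-- A transient nearest neighbour random walk on an infinite locally finite tree `T`
converges almost surely to a random end: there is a `∂T`-valued random variable `Z_∞`
such that for every starting vertex `x`,
`Prob_x[Z_n → Z_∞ in the end topology of T ∪ ∂T] = 1`.  Convergence of `Z_n` to the
end represented by the ray `Z_∞` means that for every `m`, eventually the vertex
`(Z_∞) m` is an ancestor of `Z_n`. -/
theorem stmt_10 [Infinite V] (root : V) (par : V → V) (depth : V → ℕ)
    (hroot : par root = root) (hdepth0 : depth root = 0)
    (hdepth : ∀ x, x ≠ root → depth (par x) + 1 = depth x)
    (hlocfin : ∀ x : V, {y | par y = x ∧ y ≠ x}.Finite)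
    (p : V → V → ENNReal)
    (hnn : ∀ x y : V, 0 < p x y ↔ adjT par x y)
    (hstoch : ∀ x : V, ∑' y, p x y = 1)
    {Ω : Type*} [MeasurableSpace Ω] (P : V → Measure Ω)
    [∀ x, IsProbabilityMeasure (P x)]
    (Z : ℕ → Ω → V)
    (hstart : ∀ x : V, P x {ω | Z 0 ω = x} = 1)
    (hMarkov : ∀ (x : V) (n : ℕ) (w : ℕ → V),
      P x {ω | ∀ k ≤ n + 1, Z k ω = w k}
        = P x {ω | ∀ k ≤ n, Z k ω = w k} * p (w n) (w (n + 1)))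
    (htrans : ∀ x y : V, ∀ᵐ ω ∂(P x), {n : ℕ | Z n ω = y}.Finite) :
    ∃ Zinf : Ω → Ends root par, ∀ x : V, ∀ᵐ ω ∂(P x),
      ∀ m : ℕ, ∀ᶠ n in atTop, ∃ k : ℕ, par^[k] (Z n ω) = (Zinf ω).1 m :=
  stmt_10_general root par depth hdepth0 hdepth hlocfin p hnn P Z hMarkov htrans
end

section
/- Let T be a rooted tree with forward degrees ≥ 2 carrying a transient nearest neighbour random walk whose limit distribution ν_o is fully supported on ∂T and whose Green kernel vanishes at infinity. If an ultrametric element φ satisfies, for all ends ξ ≠ η, the identity 1/φ(o) + ∫_{1/φ(o)}^{1/φ(ξ∧η)} dt/ν_o(B_φ(ξ,1/t)) = 1/(G(o,o)F(o,ξ∧η)F(ξ∧η,o)), then φ(x) = G(x,o) for all x ∈ T. -/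
open Filter MeasureTheory
open scoped ENNReal

variable {V : Type*} [DecidableEq V]

instance (root : V) (par : V → V) : MeasurableSpace (Ends root par) := ⊤

open Classical in
/-- The ultrametric `d_φ` on `∂T` induced by an ultrametric element `φ`. -/
noncomputable def dphi (root : V) (par : V → V) (φ : V → ℝ)
    (ξ η : Ends root par) : ℝ :=
  if ξ = η then 0 else φ (confl ξ η)

/-- Closed balls of the ultrametric `d_φ` on `∂T`. -/
def ballPhi (root : V) (par : V → V) (φ : V → ℝ) (ξ : Ends root par) (r : ℝ) :
    Set (Ends root par) :=
  {η | dphi root par φ η ξ ≤ r}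

/-- `pn p n x y` : `n`-step transition probabilities. -/
noncomputable def pn (p : V → V → ℝ≥0∞) : ℕ → V → V → ℝ≥0∞
  | 0 => fun x y => if x = y then 1 else 0
  | n + 1 => fun x y => ∑' z, p x z * pn p n z y

/-- The Green kernel `G(x,y) = Σ_{n≥0} p⁽ⁿ⁾(x,y)`. -/
noncomputable def Grn (p : V → V → ℝ≥0∞) (x y : V) : ℝ≥0∞ := ∑' n, pn p n x y

/-- `fn p n x y` : probability of first visit to `y` at time `n`, starting at `x`. -/
noncomputable def fn (p : V → V → ℝ≥0∞) : ℕ → V → V → ℝ≥0∞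
  | 0 => fun x y => if x = y then 1 else 0
  | n + 1 => fun x y => if x = y then 0 else ∑' z, p x z * fn p n z y

/-- `F(x,y)` : the probability of ever reaching `y` from `x`. -/
noncomputable def Fhit (p : V → V → ℝ≥0∞) (x y : V) : ℝ≥0∞ := ∑' n, fn p n x y


/-!
Follow a ray `ξ = (ξ₀ = o, ξ₁, …)` and induct on the level. Since every vertex has two children,
at each level `n` some end `η` branches off `ξ` exactly at `ξₙ`, so the hypothesis holds with
`ξ ∧ η = ξₙ`; at `n = 0` it reads `1/φ(o) = 1/G(o,o)`. For `1/φ(ξₙ) < t ≤ 1/φ(ξₙ₊₁)` the ball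
`B_φ(ξ, 1/t)` is the branch `∂T_x` of `x = ξₙ₊₁`, so the difference of the identities at levels
`n + 1` and `n` is `(1/φ(x) - 1/φ(x⁻)) / ν_o(∂T_x)`. Every path between `o` and `x` passes
through `x⁻`, whence `F(o,x) = F(o,x⁻)F(x⁻,x)` and `F(x,o) = F(x,x⁻)F(x⁻,o)`; together with
`G(x,o) = F(x,o)G(o,o)` and the formula for `ν_o(∂T_x)` the recursion solves to `φ(x) = G(x,o)`.
-/

open Finset

theorem ENNReal.tsum_mul_tsum_eq_tsum_sum_antidiagonal (f g : ℕ → ℝ≥0∞) :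
    (∑' n, f n) * ∑' n, g n = ∑' n, ∑ kl ∈ antidiagonal n, f kl.1 * g kl.2 := by
  have h : ∀ n, ∑ kl ∈ antidiagonal n, f kl.1 * g kl.2
      = ∑' kl : antidiagonal n, f kl.1.1 * g kl.1.2 := fun n =>
    (sum_finset_coe _ _).symm.trans (tsum_fintype _).symm
  simp_rw [h, ← ENNReal.tsum_mul_right, ← ENNReal.tsum_mul_left]
  rw [← ENNReal.tsum_sigma' (fun x : Σ n, antidiagonal n => f x.2.1.1 * g x.2.1.2),
    ← ENNReal.tsum_prod (f := fun k l => f k * g l)]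
  exact (HasAntidiagonal.sigmaAntidiagonalEquivProd.tsum_eq (fun kl => f kl.1 * g kl.2)).symm

section Walk

variable {p : V → V → ℝ≥0∞}

lemma fn_zero_of_ne {x y : V} (h : x ≠ y) : fn p 0 x y = 0 := if_neg h

lemma fn_succ_of_ne {x y : V} (h : x ≠ y) (n : ℕ) :
    fn p (n + 1) x y = ∑' z, p x z * fn p n z y := if_neg h

lemma fn_self (n : ℕ) (y : V) : fn p n y y = if n = 0 then 1 else 0 := by
  cases n <;> simp [fn]

lemma Fhit_self (y : V) : Fhit p y y = 1 := by
  rw [Fhit, tsum_eq_single 0 fun n hn => by simp [fn_self, hn]]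
  simp [fn_self]

lemma sum_antidiagonal_fn_self_mul (g : ℕ → ℝ≥0∞) (n : ℕ) (w : V) :
    ∑ kl ∈ antidiagonal n, fn p kl.1 w w * g kl.2 = g n := by
  rw [sum_eq_single_of_mem (0, n) (by simp) fun kl hkl h0 => ?_]
  · simp [fn_self]
  · have : kl.1 ≠ 0 := fun h => h0 (Prod.ext h (by simpa [h] using mem_antidiagonal.mp hkl))
    simp [fn_self, this]

/-- Decomposition at the first visit to `w`, through which every path leaving `A` must go. -/
lemma eq_sum_antidiagonal_fn_mul {A : Set V} {w : V} (hw : w ∉ A)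
    (hA : ∀ a ∈ A, ∀ z, p a z ≠ 0 → z ∈ A ∨ z = w) {g : ℕ → V → ℝ≥0∞}
    (hg0 : ∀ a ∈ A, g 0 a = 0) (hg : ∀ n, ∀ a ∈ A, g (n + 1) a = ∑' z, p a z * g n z) :
    ∀ n, ∀ a ∈ insert w A, g n a = ∑ kl ∈ antidiagonal n, fn p kl.1 a w * g kl.2 w := by
  intro n
  induction n with
  | zero =>
    rintro a (rfl | ha)
    · exact (sum_antidiagonal_fn_self_mul (g · a) 0 a).symm
    · have haw : a ≠ w := fun h => hw (h ▸ ha)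
      simp [hg0 a ha, fn_zero_of_ne haw]
  | succ n ih =>
    rintro a (rfl | ha)
    · exact (sum_antidiagonal_fn_self_mul (g · a) _ a).symm
    · have haw : a ≠ w := fun h => hw (h ▸ ha)
      have hz : ∀ z, p a z * g n z
          = ∑ kl ∈ antidiagonal n, p a z * fn p kl.1 z w * g kl.2 w := by
        intro z
        by_cases hpz : p a z = 0
        · simp [hpz]
        · rw [ih z (hA a ha z hpz).symm, mul_sum]
          simp only [mul_assoc]
      rw [hg n a ha, Nat.sum_antidiagonal_succ, fn_zero_of_ne haw, zero_mul, zero_add]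
      simp_rw [hz, fn_succ_of_ne haw, ← ENNReal.tsum_mul_right]
      exact Summable.tsum_finsetSum fun _ _ => ENNReal.summable

lemma tsum_eq_Fhit_mul_tsum {A : Set V} {w : V} (hw : w ∉ A)
    (hA : ∀ a ∈ A, ∀ z, p a z ≠ 0 → z ∈ A ∨ z = w) {g : ℕ → V → ℝ≥0∞}
    (hg0 : ∀ a ∈ A, g 0 a = 0) (hg : ∀ n, ∀ a ∈ A, g (n + 1) a = ∑' z, p a z * g n z)
    {a : V} (ha : a ∈ insert w A) : ∑' n, g n a = Fhit p a w * ∑' n, g n w := by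
  rw [Fhit, ENNReal.tsum_mul_tsum_eq_tsum_sum_antidiagonal]
  exact tsum_congr fun n => eq_sum_antidiagonal_fn_mul hw hA hg0 hg n a ha

lemma Grn_eq_Fhit_mul (x y : V) : Grn p x y = Fhit p x y * Grn p y y :=
  tsum_eq_Fhit_mul_tsum (A := {a | a ≠ y}) (g := fun n a => pn p n a y) (by simp)
    (fun _ _ z _ => em' (z = y)) (fun _ ha => if_neg ha) (fun _ _ _ => rfl) (by simp [em])

lemma Fhit_eq_Fhit_mul {A : Set V} {w y : V} (hw : w ∉ A) (hy : y ∉ A)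
    (hA : ∀ a ∈ A, ∀ z, p a z ≠ 0 → z ∈ A ∨ z = w) {a : V} (ha : a ∈ insert w A) :
    Fhit p a y = Fhit p a w * Fhit p w y :=
  tsum_eq_Fhit_mul_tsum (g := fun n a => fn p n a y) hw hA
    (fun _ ha => fn_zero_of_ne fun h => hy (h ▸ ha))
    (fun n a ha => fn_succ_of_ne (fun (h : a = y) => hy (h ▸ ha)) n) ha

lemma Fhit_pos_of_pos {x y : V} (hxy : x ≠ y) (h : 0 < p x y) : 0 < Fhit p x y :=
  calc 0 < p x y * fn p 0 y y := by simpa [fn_self] using h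
    _ ≤ fn p 1 x y := by rw [fn_succ_of_ne hxy]; exact ENNReal.le_tsum y
    _ ≤ Fhit p x y := ENNReal.le_tsum 1

lemma Fhit_le_one (hp : ∀ x, ∑' y, p x y ≤ 1) (x y : V) : Fhit p x y ≤ 1 := by
  suffices h : ∀ N x, ∑ n ∈ range N, fn p n x y ≤ 1 from
    ENNReal.tsum_le_of_sum_range_le fun N => h N x
  intro N
  induction N with
  | zero => simp
  | succ N ih =>
    intro x
    rw [sum_range_succ']
    by_cases hxy : x = y
    · subst hxy
      simp [fn_self]
    · simp_rw [fn_succ_of_ne hxy, fn_zero_of_ne hxy, add_zero,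
        ← Summable.tsum_finsetSum fun _ _ => ENNReal.summable, ← mul_sum]
      calc ∑' z, p x z * ∑ i ∈ range N, fn p i z y ≤ ∑' z, p x z :=
            ENNReal.tsum_le_tsum fun z => mul_le_of_le_one_right' (ih z)
        _ ≤ 1 := hp x

end Walk

section Tree

omit [DecidableEq V]

variable {root : V} {par : V → V} {depth : V → ℕ} {p : V → V → ℝ≥0∞}

structure IsRootedTree (root : V) (par : V → V) (depth : V → ℕ) : Prop where
  par_root : par root = root
  depth_root : depth root = 0
  depth_par : ∀ x, x ≠ root → depth (par x) + 1 = depth x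

def subtree (par : V → V) (x : V) : Set V := {v | ∃ k, par^[k] v = x}

lemma self_mem_subtree (x : V) : x ∈ subtree par x := ⟨0, rfl⟩

lemma mem_subtree_or_eq_par_of_adj {x a z : V} (ha : a ∈ subtree par x)
    (h : par a = z ∨ par z = a) : z ∈ subtree par x ∨ z = par x := by
  obtain ⟨k, hk⟩ := ha
  rcases h with rfl | rfl
  · cases k with
    | zero => exact Or.inr (congrArg par hk)
    | succ k => exact Or.inl ⟨k, hk⟩
  · exact Or.inl ⟨k + 1, hk⟩

lemma notMem_subtree_of_adj {x a z : V} (ha : a ∉ subtree par x) (hax : a ≠ par x)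
    (h : par a = z ∨ par z = a) : z ∉ subtree par x := by
  rintro ⟨k, hk⟩
  rcases h with rfl | rfl
  · exact ha ⟨k + 1, hk⟩
  · cases k with
    | zero => exact hax (congrArg par hk)
    | succ k => exact ha ⟨k, hk⟩

lemma par_eq_or_of_ne_zero (hnn : ∀ x y : V, 0 < p x y ↔ adjT par x y) {a z : V}
    (h : p a z ≠ 0) : par a = z ∨ par z = a :=
  ((hnn a z).mp (pos_iff_ne_zero.mpr h)).2

namespace IsRootedTree

variable (hT : IsRootedTree root par depth)
include hT

lemma eq_root_of_depth_eq_zero {x : V} (hx : depth x = 0) : x = root := by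
  by_contra h
  have := hT.depth_par x h
  omega

lemma par_ne {x : V} (hx : x ≠ root) : par x ≠ x := fun h => by
  have := hT.depth_par x hx
  rw [h] at this
  omega

lemma depth_iterate_par (k : ℕ) (x : V) : depth (par^[k] x) = depth x - k := by
  induction k with
  | zero => rfl
  | succ k ih =>
    rw [Function.iterate_succ_apply']
    by_cases h : par^[k] x = root
    · rw [h, hT.par_root, hT.depth_root]
      rw [h, hT.depth_root] at ih
      omega
    · have := hT.depth_par _ h
      omega

lemma iterate_par_depth (x : V) : par^[depth x] x = root :=
  hT.eq_root_of_depth_eq_zero (by rw [hT.depth_iterate_par]; omega)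

lemma depth_of_par_eq {x y : V} (h : par y = x) (hyx : y ≠ x) : depth y = depth x + 1 := by
  have hy : y ≠ root := fun hy => hyx (by rw [← h, hy, hT.par_root])
  rw [← hT.depth_par y hy, h]

lemma depth_le_of_mem_subtree {x v : V} (hv : v ∈ subtree par x) : depth x ≤ depth v := by
  obtain ⟨k, rfl⟩ := hv
  rw [hT.depth_iterate_par]
  omega

lemma root_notMem_subtree {x : V} (hx : x ≠ root) : root ∉ subtree par x := fun h =>
  hx (hT.eq_root_of_depth_eq_zero (Nat.le_zero.mp (hT.depth_root ▸ hT.depth_le_of_mem_subtree h)))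

lemma par_notMem_subtree {x : V} (hx : x ≠ root) : par x ∉ subtree par x := fun h => by
  have h₁ := hT.depth_le_of_mem_subtree h
  have h₂ := hT.depth_par x hx
  omega

end IsRootedTree

namespace Ends

lemma par_apply_succ (ξ : Ends root par) (n : ℕ) : par (ξ.1 (n + 1)) = ξ.1 n := (ξ.2.2 n).1

lemma iterate_par_apply (ξ : Ends root par) (m j : ℕ) : par^[j] (ξ.1 (m + j)) = ξ.1 m := by
  induction j with
  | zero => rfl
  | succ j ih => rw [Function.iterate_succ_apply, ← add_assoc, par_apply_succ ξ, ih]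

lemma apply_eq_of_le {ξ η : Ends root par} {m n : ℕ} (h : m ≤ n) (hn : ξ.1 n = η.1 n) :
    ξ.1 m = η.1 m := by
  obtain ⟨j, rfl⟩ := Nat.exists_eq_add_of_le h
  rw [← iterate_par_apply ξ m j, ← iterate_par_apply η m j, hn]

lemma apply_eq_iff_le_sSup {ξ η : Ends root par} (h : ξ ≠ η) (k : ℕ) :
    ξ.1 k = η.1 k ↔ k ≤ sSup {n | ξ.1 n = η.1 n} := by
  have hbdd : BddAbove {n | ξ.1 n = η.1 n} := by
    refine not_not.mp fun hun => h (Subtype.ext (funext fun n => ?_))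
    obtain ⟨m, hm, hnm⟩ := not_bddAbove_iff.mp hun n
    exact apply_eq_of_le hnm.le hm
  refine ⟨fun hk => le_csSup hbdd hk, fun hk => apply_eq_of_le hk ?_⟩
  exact Nat.sSup_mem ⟨0, by rw [Set.mem_ofPred_eq, ξ.2.1, η.2.1]⟩ hbdd

lemma confl_eq_of_apply {ξ η : Ends root par} {d : ℕ} (hd : ξ.1 d = η.1 d)
    (hd₁ : ξ.1 (d + 1) ≠ η.1 (d + 1)) : confl ξ η = ξ.1 d := by
  have hne : ξ ≠ η := fun h => hd₁ (h ▸ rfl)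
  have h₁ := (apply_eq_iff_le_sSup hne d).mp hd
  have h₂ := (apply_eq_iff_le_sSup hne (d + 1)).not.mp hd₁
  rw [confl, show sSup {n | ξ.1 n = η.1 n} = d by omega]

lemma apply_succ_ne_root (hT : IsRootedTree root par depth) (ξ : Ends root par) (n : ℕ) :
    ξ.1 (n + 1) ≠ root := fun h =>
  (ξ.2.2 n).2 (by rw [← par_apply_succ ξ n, h, hT.par_root])

lemma depth_apply (hT : IsRootedTree root par depth) (ξ : Ends root par) (n : ℕ) :
    depth (ξ.1 n) = n := by
  induction n with
  | zero => rw [ξ.2.1, hT.depth_root]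
  | succ n ih => rw [← hT.depth_par _ (apply_succ_ne_root hT ξ n), par_apply_succ ξ, ih]

lemma mem_branchEnds_iff (hT : IsRootedTree root par depth) {ξ : Ends root par} {x : V} :
    ξ ∈ branchEnds root par x ↔ ξ.1 (depth x) = x :=
  ⟨fun ⟨n, hn⟩ => by rw [← hn, depth_apply hT], fun h => ⟨_, h⟩⟩

lemma exists_apply_depth_eq (hT : IsRootedTree root par depth)
    (hchild : ∀ v, ∃ y, par y = v ∧ y ≠ v) (x : V) : ∃ ξ : Ends root par, ξ.1 (depth x) = x := by
  choose c hc using hchild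
  have hdepth_c : ∀ j, depth (c^[j] x) = depth x + j := by
    intro j
    induction j with
    | zero => rfl
    | succ j ih =>
      rw [Function.iterate_succ_apply', hT.depth_of_par_eq (hc _).1 (hc _).2, ih, add_assoc]
  -- descend from the root to `x`, then keep choosing children
  let s : ℕ → V := fun n => par^[depth x - n] (c^[n - depth x] x)
  have hs : ∀ n, depth (s n) = n := fun n => by
    simp only [s, hT.depth_iterate_par, hdepth_c]
    omega
  refine ⟨⟨s, by simp [s, hT.iterate_par_depth], fun n => ⟨?_, fun h => ?_⟩⟩, by simp [s]⟩
  · rcases le_or_gt (depth x) n with h | h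
    · simp only [s, Nat.sub_eq_zero_of_le h, Nat.sub_eq_zero_of_le (h.trans n.le_succ),
        Nat.succ_sub h, Function.iterate_succ_apply', (hc _).1, Function.iterate_zero, id]
    · simp only [s, Nat.sub_eq_zero_of_le h, Nat.sub_eq_zero_of_le h.le,
        ← Function.iterate_succ_apply' par, Function.iterate_zero, id]
      congr 1
      omega
  · have := congrArg depth h
    rw [hs, hs] at this
    omega

lemma exists_confl_eq (hT : IsRootedTree root par depth)
    (hdeg : ∀ x : V, ∃ y z : V, y ≠ z ∧ par y = x ∧ par z = x ∧ y ≠ x ∧ z ≠ x)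
    (ξ : Ends root par) (n : ℕ) : ∃ η : Ends root par, ξ ≠ η ∧ confl ξ η = ξ.1 n := by
  obtain ⟨y, hy, hyξ, hyn⟩ : ∃ y, par y = ξ.1 n ∧ y ≠ ξ.1 (n + 1) ∧ y ≠ ξ.1 n := by
    obtain ⟨y, z, hyz, hy, hz, hyn, hzn⟩ := hdeg (ξ.1 n)
    by_cases h : y = ξ.1 (n + 1)
    · exact ⟨z, hz, fun h' => hyz (h.trans h'.symm), hzn⟩
    · exact ⟨y, hy, h, hyn⟩
  have hchild : ∀ v, ∃ y, par y = v ∧ y ≠ v := fun v => by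
    obtain ⟨y, -, -, hy, -, hyv, -⟩ := hdeg v
    exact ⟨y, hy, hyv⟩
  obtain ⟨η, hη⟩ := exists_apply_depth_eq hT hchild y
  rw [hT.depth_of_par_eq hy hyn, depth_apply hT] at hη
  have hn : ξ.1 n = η.1 n := by rw [← par_apply_succ η, hη, hy]
  have hn₁ : ξ.1 (n + 1) ≠ η.1 (n + 1) := by rw [hη]; exact hyξ.symm
  exact ⟨η, fun h => hn₁ (h ▸ rfl), confl_eq_of_apply hn hn₁⟩

end Ends

end Tree

section Boundary

omit [DecidableEq V]

open intervalIntegral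

variable {root : V} {par : V → V} {depth : V → ℕ} {φ : V → ℝ}

lemma Ends.strictAnti_phi_apply (hT : IsRootedTree root par depth)
    (hmono : ∀ x, x ≠ root → φ x < φ (par x)) (ξ : Ends root par) :
    StrictAnti fun n => φ (ξ.1 n) := by
  refine strictAnti_nat_of_succ_lt fun n => ?_
  simpa only [ξ.par_apply_succ n] using hmono _ (ξ.apply_succ_ne_root hT n)

lemma ballPhi_eq_branchEnds (hT : IsRootedTree root par depth) (hpos : ∀ x, 0 < φ x)
    (hmono : ∀ x, x ≠ root → φ x < φ (par x)) (ξ : Ends root par) (n : ℕ) {r : ℝ}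
    (hr₁ : φ (ξ.1 (n + 1)) ≤ r) (hr₂ : r < φ (ξ.1 n)) :
    ballPhi root par φ ξ r = branchEnds root par (ξ.1 (n + 1)) := by
  have hanti := ξ.strictAnti_phi_apply hT hmono
  ext η
  rw [Ends.mem_branchEnds_iff hT, Ends.depth_apply hT, ballPhi, Set.mem_ofPred_eq, dphi]
  split_ifs with hηξ
  · simpa [hηξ] using (hpos _).le.trans hr₁
  · rw [Ends.apply_eq_iff_le_sSup hηξ, confl,
      (Ends.apply_eq_iff_le_sSup hηξ _).mpr le_rfl]
    constructor
    · intro h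
      by_contra! hm
      exact (hr₂.trans_le (hanti.antitone (Nat.le_of_lt_succ hm))).not_ge h
    · exact fun h => (hanti.antitone h).trans hr₁

variable (ν : Measure (Ends root par))

lemma eqOn_inv_measure_ballPhi (hT : IsRootedTree root par depth) (hpos : ∀ x, 0 < φ x)
    (hmono : ∀ x, x ≠ root → φ x < φ (par x)) (ξ : Ends root par) (n : ℕ) :
    Set.EqOn (fun t => (ν (ballPhi root par φ ξ (1 / t))).toReal⁻¹)
      (fun _ => (ν (branchEnds root par (ξ.1 (n + 1)))).toReal⁻¹)
      (Set.uIoc (1 / φ (ξ.1 n)) (1 / φ (ξ.1 (n + 1)))) := by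
  rw [Set.uIoc_of_le (one_div_le_one_div_of_le (hpos _)
    ((ξ.strictAnti_phi_apply hT hmono).antitone n.le_succ))]
  rintro t ⟨ht₁, ht₂⟩
  have ht : 0 < t := lt_trans (by simpa using hpos _) ht₁
  simp only
  rw [ballPhi_eq_branchEnds hT hpos hmono ξ n]
  · rwa [le_one_div (hpos _) ht]
  · rwa [one_div_lt ht (hpos _)]

lemma intervalIntegrable_inv_measure_ballPhi (hT : IsRootedTree root par depth)
    (hpos : ∀ x, 0 < φ x) (hmono : ∀ x, x ≠ root → φ x < φ (par x)) (ξ : Ends root par)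
    (n : ℕ) : IntervalIntegrable (fun t => (ν (ballPhi root par φ ξ (1 / t))).toReal⁻¹) volume
      (1 / φ root) (1 / φ (ξ.1 n)) := by
  induction n with
  | zero => rw [ξ.2.1]
  | succ n ih =>
    exact ih.trans ((intervalIntegrable_congr (eqOn_inv_measure_ballPhi ν hT hpos hmono ξ n)).mpr
      intervalIntegrable_const)

lemma integral_inv_measure_ballPhi_succ (hT : IsRootedTree root par depth)
    (hpos : ∀ x, 0 < φ x) (hmono : ∀ x, x ≠ root → φ x < φ (par x)) (ξ : Ends root par)
    (n : ℕ) :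
    ∫ t in (1 / φ root)..(1 / φ (ξ.1 (n + 1))), (ν (ballPhi root par φ ξ (1 / t))).toReal⁻¹
      = (∫ t in (1 / φ root)..(1 / φ (ξ.1 n)), (ν (ballPhi root par φ ξ (1 / t))).toReal⁻¹)
        + (1 / φ (ξ.1 (n + 1)) - 1 / φ (ξ.1 n))
          * (ν (branchEnds root par (ξ.1 (n + 1)))).toReal⁻¹ := by
  have heq := eqOn_inv_measure_ballPhi ν hT hpos hmono ξ n
  rw [← integral_add_adjacent_intervals (intervalIntegrable_inv_measure_ballPhi ν hT hpos hmono ξ n)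
    ((intervalIntegrable_congr heq).mpr intervalIntegrable_const),
    integral_congr_ae (ae_of_all _ heq), intervalIntegral.integral_const, smul_eq_mul]

end Boundary

section TreeWalk

variable {root : V} {par : V → V} {depth : V → ℕ} {p : V → V → ℝ≥0∞}

lemma Fhit_pos_of_adjT (hnn : ∀ x y : V, 0 < p x y ↔ adjT par x y) {x y : V}
    (h : adjT par x y) : 0 < Fhit p x y :=
  Fhit_pos_of_pos h.1 ((hnn x y).mpr h)

lemma Fhit_root_left_eq_mul (hT : IsRootedTree root par depth)
    (hnn : ∀ x y : V, 0 < p x y ↔ adjT par x y) {x : V} (hx : x ≠ root) :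
    Fhit p root x = Fhit p root (par x) * Fhit p (par x) x := by
  refine Fhit_eq_Fhit_mul (A := {v | v ∉ subtree par x ∧ v ≠ par x}) (fun h => h.2 rfl)
    (fun h => h.1 (self_mem_subtree x)) (fun a ha z hz => ?_)
    ((em (root = par x)).imp id fun h => ⟨hT.root_notMem_subtree hx, h⟩)
  exact (em' (z = par x)).imp
    (fun h => ⟨notMem_subtree_of_adj ha.1 ha.2 (par_eq_or_of_ne_zero hnn hz), h⟩) id

lemma Fhit_root_right_eq_mul (hT : IsRootedTree root par depth)
    (hnn : ∀ x y : V, 0 < p x y ↔ adjT par x y) {x : V} (hx : x ≠ root) :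
    Fhit p x root = Fhit p x (par x) * Fhit p (par x) root :=
  Fhit_eq_Fhit_mul (hT.par_notMem_subtree hx) (hT.root_notMem_subtree hx)
    (fun _ ha _ hz => mem_subtree_or_eq_par_of_adj ha (par_eq_or_of_ne_zero hnn hz))
    (Or.inr (self_mem_subtree x))

lemma Fhit_root_left_pos (hT : IsRootedTree root par depth)
    (hnn : ∀ x y : V, 0 < p x y ↔ adjT par x y) (x : V) : 0 < Fhit p root x := by
  induction h : depth x generalizing x with
  | zero => simp [hT.eq_root_of_depth_eq_zero h, Fhit_self]
  | succ n ih =>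
    have hx : x ≠ root := fun hx => by simp [hx, hT.depth_root] at h
    rw [Fhit_root_left_eq_mul hT hnn hx]
    exact ENNReal.mul_pos (ih (par x) (by have := hT.depth_par x hx; omega)).ne'
      (Fhit_pos_of_adjT hnn ⟨hT.par_ne hx, Or.inr rfl⟩).ne'

/-- With `g = G(o,o)`, `u = F(o,x⁻)`, `v = F(x⁻,o)`, `s = F(x⁻,x)` and `q = F(x,x⁻)` one has
`F(o,x) = us`, `F(x,o) = qv`, `G(x⁻,o) = vg` and `G(x,o) = qvg`. -/
lemma eq_mul_of_inv_sub_inv_mul_eq {a g u v s q : ℝ} (hgv : v * g ≠ 0) (hu : u ≠ 0)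
    (hs : s ≠ 0) (hq : q ≠ 0) (hq₁ : q ≠ 1) (hsq : s * q ≠ 1)
    (h : (1 / a - 1 / (v * g)) * (u * s * (1 - q) / (1 - s * q))⁻¹
      = 1 / (g * (u * s) * (q * v)) - 1 / (g * u * v)) : a = q * v * g := by
  have hv : v ≠ 0 := left_ne_zero_of_mul hgv
  have hg : g ≠ 0 := right_ne_zero_of_mul hgv
  have h₁ : 1 - q ≠ 0 := sub_ne_zero.mpr (Ne.symm hq₁)
  have h₂ : 1 - s * q ≠ 0 := sub_ne_zero.mpr (Ne.symm hsq)
  have key : 1 / a = 1 / (q * v * g) := by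
    field_simp at h
    field_simp
    linear_combination h
  simpa only [one_div, inv_inj] using key

lemma eq_Grn_of_inv_sub_inv_mul_eq (hT : IsRootedTree root par depth)
    (hnn : ∀ x y : V, 0 < p x y ↔ adjT par x y) (hp : ∀ x : V, ∑' y, p x y ≤ 1)
    (hF : ∀ x, x ≠ root → Fhit p x (par x) < 1) {x : V} (hx : x ≠ root) {a : ℝ}
    (hw : (Grn p (par x) root).toReal ≠ 0)
    (h : (1 / a - 1 / (Grn p (par x) root).toReal)
        * (Fhit p root x * (1 - Fhit p x (par x))
            / (1 - Fhit p (par x) x * Fhit p x (par x))).toReal⁻¹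
      = 1 / ((Grn p root root).toReal * (Fhit p root x).toReal * (Fhit p x root).toReal)
        - 1 / ((Grn p root root).toReal * (Fhit p root (par x)).toReal
            * (Fhit p (par x) root).toReal)) :
    a = (Grn p x root).toReal := by
  have hle := Fhit_le_one hp
  have hfin : ∀ a b, Fhit p a b ≠ ⊤ := fun a b => ne_top_of_le_ne_top ENNReal.one_ne_top (hle a b)
  have hpos : ∀ {a b}, 0 < Fhit p a b → (Fhit p a b).toReal ≠ 0 := fun h =>
    (ENNReal.toReal_pos h.ne' (hfin _ _)).ne'
  have hq₁ : (Fhit p x (par x)).toReal < 1 := by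
    simpa using (ENNReal.toReal_lt_toReal (hfin _ _) ENNReal.one_ne_top).mpr (hF x hx)
  have hs₁ : (Fhit p (par x) x).toReal ≤ 1 :=
    ENNReal.toReal_le_of_le_ofReal zero_le_one (by simpa using hle _ _)
  rw [Grn_eq_Fhit_mul (par x)] at h hw
  rw [Fhit_root_left_eq_mul hT hnn hx, Fhit_root_right_eq_mul hT hnn hx] at h
  rw [Grn_eq_Fhit_mul x, Fhit_root_right_eq_mul hT hnn hx]
  simp only [ENNReal.toReal_mul, ENNReal.toReal_div, ENNReal.toReal_one,
    ENNReal.toReal_sub_of_le (hle _ _) ENNReal.one_ne_top,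
    ENNReal.toReal_sub_of_le (mul_le_one' (hle _ _) (hle _ _)) ENNReal.one_ne_top] at h hw ⊢
  exact eq_mul_of_inv_sub_inv_mul_eq hw (hpos (Fhit_root_left_pos hT hnn _))
    (hpos (Fhit_pos_of_adjT hnn ⟨hT.par_ne hx, Or.inr rfl⟩))
    (hpos (Fhit_pos_of_adjT hnn ⟨(hT.par_ne hx).symm, Or.inl rfl⟩)) hq₁.ne
    ((mul_le_of_le_one_left ENNReal.toReal_nonneg hs₁).trans_lt hq₁).ne h

theorem phi_apply_eq_Grn (hT : IsRootedTree root par depth)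
    (hnn : ∀ x y : V, 0 < p x y ↔ adjT par x y) (hp : ∀ x : V, ∑' y, p x y ≤ 1)
    (hF : ∀ x, x ≠ root → Fhit p x (par x) < 1) {φ : V → ℝ} (hpos : ∀ x, 0 < φ x)
    (hmono : ∀ x, x ≠ root → φ x < φ (par x)) {ν : Measure (Ends root par)}
    (hν : ∀ x, x ≠ root → ν (branchEnds root par x)
      = Fhit p root x * (1 - Fhit p x (par x)) / (1 - Fhit p (par x) x * Fhit p x (par x)))
    (ξ : Ends root par)
    (hid : ∀ n, 1 / φ root
        + ∫ t in (1 / φ root)..(1 / φ (ξ.1 n)), (ν (ballPhi root par φ ξ (1 / t))).toReal⁻¹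
      = 1 / ((Grn p root root).toReal * (Fhit p root (ξ.1 n)).toReal
          * (Fhit p (ξ.1 n) root).toReal)) (n : ℕ) :
    φ (ξ.1 n) = (Grn p (ξ.1 n) root).toReal := by
  induction n with
  | zero => simpa [ξ.2.1, Fhit_self] using hid 0
  | succ n ih =>
    have hx := ξ.apply_succ_ne_root hT n
    have hpar := ξ.par_apply_succ n
    refine eq_Grn_of_inv_sub_inv_mul_eq hT hnn hp hF hx (hpar ▸ ih ▸ (hpos _).ne') ?_
    rw [← hν _ hx, hpar, ← ih]
    linarith [hid n, hid (n + 1), integral_inv_measure_ballPhi_succ ν hT hpos hmono ξ n]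

end TreeWalk

theorem stmt_16_general (root : V) (par : V → V) (depth : V → ℕ)
    (hroot : par root = root) (hdepth0 : depth root = 0)
    (hdepth : ∀ x, x ≠ root → depth (par x) + 1 = depth x)
    (hdeg : ∀ x : V, ∃ y z : V, y ≠ z ∧ par y = x ∧ par z = x ∧ y ≠ x ∧ z ≠ x)
    (p : V → V → ℝ≥0∞)
    (hnn : ∀ x y : V, 0 < p x y ↔ adjT par x y)
    (hstoch : ∀ x : V, ∑' y, p x y = 1)
    (hF : ∀ x, x ≠ root → Fhit p x (par x) < 1)
    (φ : V → ℝ) (hpos : ∀ x, 0 < φ x)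
    (hmono : ∀ x, x ≠ root → φ x < φ (par x))
    (ν : Measure (Ends root par))
    (hν : ∀ x, x ≠ root → ν (branchEnds root par x)
      = Fhit p root x * (1 - Fhit p x (par x))
          / (1 - Fhit p (par x) x * Fhit p x (par x)))
    (hid : ∀ ξ η : Ends root par, ξ ≠ η →
      1 / φ root
        + ∫ t in (1 / φ root)..(1 / φ (confl ξ η)),
            ((ν (ballPhi root par φ ξ (1 / t))).toReal)⁻¹
      = 1 / ((Grn p root root).toReal * (Fhit p root (confl ξ η)).toReal
          * (Fhit p (confl ξ η) root).toReal)) :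
    ∀ x : V, φ x = (Grn p x root).toReal := by
  have hT : IsRootedTree root par depth := ⟨hroot, hdepth0, hdepth⟩
  intro x
  obtain ⟨ξ, hξ⟩ := Ends.exists_apply_depth_eq hT
    (fun v => (hdeg v).elim fun y ⟨_, _, hy, _, hyv, _⟩ => ⟨y, hy, hyv⟩) x
  rw [← hξ]
  refine phi_apply_eq_Grn hT hnn (fun x => (hstoch x).le) hF hpos hmono hν ξ (fun n => ?_) _
  obtain ⟨η, hne, hconfl⟩ := ξ.exists_confl_eq hT hdeg n
  rw [← hconfl]
  exact hid ξ η hne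

/-- Let `T` be a rooted tree with forward degrees `≥ 2` carrying a transient nearest
neighbour random walk whose limit distribution `ν_o` is fully supported on `∂T` and
whose Green kernel vanishes at infinity.  If an ultrametric element `φ` satisfies, for
all ends `ξ ≠ η`,
`1/φ(o) + ∫_{1/φ(o)}^{1/φ(ξ∧η)} dt/ν_o(B_φ(ξ,1/t)) = 1/(G(o,o)F(o,ξ∧η)F(ξ∧η,o))`,
then `φ(x) = G(x,o)` for all `x ∈ T`. -/
theorem stmt_16 (root : V) (par : V → V) (depth : V → ℕ)
    (hroot : par root = root) (hdepth0 : depth root = 0)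
    (hdepth : ∀ x, x ≠ root → depth (par x) + 1 = depth x)
    (hlocfin : ∀ x : V, {y | par y = x ∧ y ≠ x}.Finite)
    (hdeg : ∀ x : V, ∃ y z : V, y ≠ z ∧ par y = x ∧ par z = x ∧ y ≠ x ∧ z ≠ x)
    (p : V → V → ℝ≥0∞)
    (hnn : ∀ x y : V, 0 < p x y ↔ adjT par x y)
    (hstoch : ∀ x : V, ∑' y, p x y = 1)
    (htrans : ∀ x y : V, Grn p x y < ⊤)
    (hF : ∀ x, x ≠ root → Fhit p x (par x) < 1)
    (hG0 : ∀ ε : ℝ≥0∞, 0 < ε → {x : V | ε ≤ Grn p x root}.Finite)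
    (φ : V → ℝ) (hpos : ∀ x, 0 < φ x)
    (hmono : ∀ x, x ≠ root → φ x < φ (par x))
    (hlim : ∀ ξ : Ends root par, Tendsto (fun n => φ (ξ.1 n)) atTop (nhds 0))
    (ν : Measure (Ends root par)) [IsProbabilityMeasure ν]
    (hν : ∀ x, x ≠ root → ν (branchEnds root par x)
      = Fhit p root x * (1 - Fhit p x (par x))
          / (1 - Fhit p (par x) x * Fhit p x (par x)))
    (hid : ∀ ξ η : Ends root par, ξ ≠ η →
      1 / φ root
        + ∫ t in (1 / φ root)..(1 / φ (confl ξ η)),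
            ((ν (ballPhi root par φ ξ (1 / t))).toReal)⁻¹
      = 1 / ((Grn p root root).toReal * (Fhit p root (confl ξ η)).toReal
          * (Fhit p (confl ξ η) root).toReal)) :
    ∀ x : V, φ x = (Grn p x root).toReal :=
  stmt_16_general root par depth hroot hdepth0 hdepth hdeg p hnn hstoch hF φ hpos hmono ν hν hid
end

section
/- Let T be a locally finite rooted tree with forward degrees ≥ 2, φ an ultrametric element on T, and μ a fully supported Borel probability measure on ∂T. Define F̃(x,x⁻) = φ(x)/φ(x⁻) for x ≠ o, and recursively F̃(x⁻,x) = (μ(∂T_x)/F̃(o,x⁻)) / (1 − F̃(x,x⁻) + F̃(x,x⁻)μ(∂T_x)/F̃(o,x⁻)) with F̃(o,o) = 1, F̃(o,x) = F̃(o,x⁻)F̃(x⁻,x). Then the transition matrix defined by p(x,y) = (1/G̃(x,x))·F̃(x,y)/(1 − F̃(x,y)F̃(y,x)) for y ∼ x, where G̃(x,x) = 1 + Σ_{y∼x} F̃(x,y)F̃(y,x)/(1 − F̃(x,y)F̃(y,x)), is stochastic: Σ_{y∼x} p(x,y) = 1 for every x. -/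
open Filter MeasureTheory

variable {V : Type*} [DecidableEq V]

/-- `F̃(x,x⁻) = φ(x)/φ(x⁻)` for a non-root vertex `x`. -/
noncomputable def Fdown (par : V → V) (φ : V → ℝ) (x : V) : ℝ := φ x / φ (par x)

/-- `F̃(o,x)`, defined recursively by `F̃(o,o) = 1` and `F̃(o,x) = F̃(o,x⁻)F̃(x⁻,x)`,
where `F̃(x⁻,x) = (μ(∂T_x)/F̃(o,x⁻)) / (1 − F̃(x,x⁻) + F̃(x,x⁻)μ(∂T_x)/F̃(o,x⁻))`. -/
noncomputable def Fo (root : V) (par : V → V) (depth : V → ℕ)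
    (hd : ∀ x, x ≠ root → depth (par x) < depth x)
    (φ : V → ℝ) (μB : V → ℝ) (x : V) : ℝ :=
  if h : x = root then 1
  else
    Fo root par depth hd φ μB (par x) *
      ((μB x / Fo root par depth hd φ μB (par x)) /
        (1 - Fdown par φ x +
          Fdown par φ x * (μB x / Fo root par depth hd φ μB (par x))))
termination_by depth x
decreasing_by all_goals exact hd x h

/-- `F̃(x⁻,x)` for a non-root vertex `x`. -/
noncomputable def Fup (root : V) (par : V → V) (depth : V → ℕ)
    (hd : ∀ x, x ≠ root → depth (par x) < depth x)
    (φ : V → ℝ) (μB : V → ℝ) (x : V) : ℝ :=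
  (μB x / Fo root par depth hd φ μB (par x)) /
    (1 - Fdown par φ x + Fdown par φ x * (μB x / Fo root par depth hd φ μB (par x)))

/-- The 'would-be' hitting probabilities `F̃(x,y)` for neighbours `x ∼ y` (and `0` for
non-neighbours). -/
noncomputable def Ft (root : V) (par : V → V) (depth : V → ℕ)
    (hd : ∀ x, x ≠ root → depth (par x) < depth x)
    (φ : V → ℝ) (μB : V → ℝ) (x y : V) : ℝ :=
  if par y = x ∧ y ≠ x then Fup root par depth hd φ μB y
  else if par x = y ∧ x ≠ y then Fdown par φ x
  else 0

/-- The 'would-be' Green function at a vertex,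
`G̃(x,x) = 1 + Σ_{y∼x} F̃(x,y)F̃(y,x)/(1 − F̃(x,y)F̃(y,x))`. -/
noncomputable def Gtd (root : V) (par : V → V) (depth : V → ℕ)
    (hd : ∀ x, x ≠ root → depth (par x) < depth x)
    (φ : V → ℝ) (μB : V → ℝ) (x : V) : ℝ :=
  1 + ∑' y : V, Ft root par depth hd φ μB x y * Ft root par depth hd φ μB y x /
      (1 - Ft root par depth hd φ μB x y * Ft root par depth hd φ μB y x)

/-- The reconstructed transition probabilities
`p(x,y) = (1/G̃(x,x)) · F̃(x,y)/(1 − F̃(x,y)F̃(y,x))`. -/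
noncomputable def pRec (root : V) (par : V → V) (depth : V → ℕ)
    (hd : ∀ x, x ≠ root → depth (par x) < depth x)
    (φ : V → ℝ) (μB : V → ℝ) (x y : V) : ℝ :=
  (1 / Gtd root par depth hd φ μB x) *
    (Ft root par depth hd φ μB x y /
      (1 - Ft root par depth hd φ μB x y * Ft root par depth hd φ μB y x))

/-!
Write `a = F̃(x,x⁻)`, `m = μ(∂T_x)/F̃(o,x⁻)` and `D = 1 - a + a m`, so that `F̃(x⁻,x) = m/D`
and `F̃(o,x) = μ(∂T_x)/D`; by induction `F̃(o,x) ≥ μ(∂T_x)`, whence `0 ≤ m ≤ 1`.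
Since `1 - F̃(x⁻,x)F̃(x,x⁻) = (1 - a)/D`, the edge terms
`F̃(x,y)(1 - F̃(y,x))/(1 - F̃(x,y)F̃(y,x))` collapse: towards a child `y` it is `μ(∂T_y)/F̃(o,x)`,
towards the parent it is `a(1 - m)`. As `μ(∂T_x)` is the sum of the `μ(∂T_y)` over the
children, the child terms add up to `μ(∂T_x)/F̃(o,x) = D`, and `D + a(1 - m) = 1`.
Finally `F̃(x,y)/(1 - F̃F̃) = F̃(x,y)(1 - F̃(y,x))/(1 - F̃F̃) + F̃F̃/(1 - F̃F̃)`, so the row sum of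
`F̃(x,y)/(1 - F̃F̃)` is exactly `G̃(x,x)`.
-/

theorem sum_div_one_sub_mul_eq_one {ι : Type*} (t : Finset ι) (f g : ι → ℝ)
    (h₀ : ∀ y ∈ t, 0 ≤ f y * g y) (h₁ : ∀ y ∈ t, f y * g y < 1)
    (h : ∑ y ∈ t, f y * (1 - g y) / (1 - f y * g y) = 1) :
    1 / (1 + ∑ y ∈ t, f y * g y / (1 - f y * g y)) * ∑ y ∈ t, f y / (1 - f y * g y) = 1 := by
  have hsplit : ∑ y ∈ t, f y / (1 - f y * g y) =
      ∑ y ∈ t, f y * (1 - g y) / (1 - f y * g y) + ∑ y ∈ t, f y * g y / (1 - f y * g y) := by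
    rw [← Finset.sum_add_distrib]
    exact Finset.sum_congr rfl fun y _ => by rw [← add_div]; ring
  have hG : 0 ≤ ∑ y ∈ t, f y * g y / (1 - f y * g y) :=
    Finset.sum_nonneg fun y hy => div_nonneg (h₀ y hy) (sub_nonneg.2 (h₁ y hy).le)
  rw [hsplit, h, one_div_mul_cancel (by positivity)]

section EdgeAlgebra

variable {a m : ℝ}

theorem one_sub_add_mul_pos (ha₀ : 0 ≤ a) (ha₁ : a < 1) (hm : 0 ≤ m) : 0 < 1 - a + a * m := by
  nlinarith

theorem one_sub_add_mul_le_one (ha₀ : 0 ≤ a) (hm : m ≤ 1) : 1 - a + a * m ≤ 1 := by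
  nlinarith

theorem one_sub_div_one_sub_add_mul_mul (hD : 1 - a + a * m ≠ 0) :
    1 - m / (1 - a + a * m) * a = (1 - a) / (1 - a + a * m) := by
  rw [div_mul_eq_mul_div, one_sub_div hD]
  ring

theorem div_one_sub_add_mul_mul_lt_one (ha₀ : 0 ≤ a) (ha₁ : a < 1) (hm : 0 ≤ m) :
    m / (1 - a + a * m) * a < 1 := by
  have hD := one_sub_add_mul_pos ha₀ ha₁ hm
  have : 0 < 1 - m / (1 - a + a * m) * a := by
    rw [one_sub_div_one_sub_add_mul_mul hD.ne']
    exact div_pos (by linarith) hD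
  linarith

theorem forward_edge_term_eq (ha₀ : 0 ≤ a) (ha₁ : a < 1) (hm : 0 ≤ m) :
    m / (1 - a + a * m) * (1 - a) / (1 - m / (1 - a + a * m) * a) = m := by
  have hD := one_sub_add_mul_pos ha₀ ha₁ hm
  have ha : 1 - a ≠ 0 := by linarith
  rw [one_sub_div_one_sub_add_mul_mul hD.ne', div_mul_eq_mul_div, div_div_div_cancel_right₀ hD.ne',
    mul_div_assoc, div_self ha, mul_one]

theorem backward_edge_term_eq (ha₀ : 0 ≤ a) (ha₁ : a < 1) (hm : 0 ≤ m) :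
    a * (1 - m / (1 - a + a * m)) / (1 - a * (m / (1 - a + a * m))) = a * (1 - m) := by
  have hD := one_sub_add_mul_pos ha₀ ha₁ hm
  have ha : 1 - a ≠ 0 := by linarith
  rw [mul_comm a (m / _), one_sub_div_one_sub_add_mul_mul hD.ne']
  field_simp
  ring

end EdgeAlgebra

section

omit [DecidableEq V]

def children (par : V → V) (x : V) : Set V := {y | par y = x ∧ y ≠ x}

structure IsTreeDepth (root : V) (par : V → V) (depth : V → ℕ) : Prop where
  par_root : par root = root
  depth_root : depth root = 0
  depth_par_add_one : ∀ x, x ≠ root → depth (par x) + 1 = depth x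

namespace IsTreeDepth

variable {root : V} {par : V → V} {depth : V → ℕ} (hT : IsTreeDepth root par depth)
include hT

theorem par_ne_self {x : V} (hx : x ≠ root) : par x ≠ x := fun h => by
  have := hT.depth_par_add_one x hx
  rw [h] at this
  omega

theorem ne_root_of_mem_children {x y : V} (hy : y ∈ children par x) : y ≠ root := by
  rintro rfl
  exact hy.2 (hT.par_root ▸ hy.1)

theorem depth_of_mem_children {x y : V} (hy : y ∈ children par x) : depth y = depth x + 1 := by
  rw [← hT.depth_par_add_one y (hT.ne_root_of_mem_children hy), hy.1]

theorem par_notMem_children (x : V) : par x ∉ children par x := fun h => by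
  have hx : x ∈ children par (par x) := ⟨rfl, fun hx => h.2 hx.symm⟩
  have := hT.depth_of_mem_children h
  have := hT.depth_of_mem_children hx
  omega

theorem depth_end (ξ : Ends root par) (n : ℕ) : depth (ξ.1 n) = n := by
  induction n with
  | zero => rw [ξ.2.1, hT.depth_root]
  | succ n ih =>
    have hchild : ξ.1 (n + 1) ∈ children par (ξ.1 n) := ξ.2.2 n
    rw [hT.depth_of_mem_children hchild, ih]

theorem mem_branchEnds_iff {x : V} {ξ : Ends root par} :
    ξ ∈ branchEnds root par x ↔ ξ.1 (depth x) = x :=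
  ⟨fun ⟨n, hn⟩ => by rw [← hn, hT.depth_end], fun h => ⟨depth x, h⟩⟩

theorem branchEnds_eq_biUnion_children (x : V) :
    branchEnds root par x = ⋃ y ∈ children par x, branchEnds root par y := by
  ext ξ
  simp only [Set.mem_iUnion, exists_prop, hT.mem_branchEnds_iff]
  constructor
  · intro hx
    have hchild : ξ.1 (depth x + 1) ∈ children par x := by
      have := ξ.2.2 (depth x)
      rwa [hx] at this
    exact ⟨_, hchild, by rw [hT.depth_of_mem_children hchild]⟩
  · rintro ⟨y, hy, hξy⟩
    rw [hT.depth_of_mem_children hy] at hξy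
    rw [← hy.1, ← hξy, (ξ.2.2 (depth x)).1, hT.depth_end]

theorem pairwiseDisjoint_branchEnds_children (x : V) :
    (children par x).PairwiseDisjoint (branchEnds root par) := by
  intro y hy z hz hyz
  refine Set.disjoint_left.2 fun ξ hξy hξz => hyz ?_
  rw [hT.mem_branchEnds_iff, hT.depth_of_mem_children hy] at hξy
  rw [hT.mem_branchEnds_iff, hT.depth_of_mem_children hz] at hξz
  rw [← hξy, hξz]

end IsTreeDepth

theorem branchEnds_root (root : V) (par : V → V) : branchEnds root par root = Set.univ :=
  Set.eq_univ_of_forall fun ξ => ⟨0, ξ.2.1⟩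

structure IsUnitFlow (root : V) (par : V → V) (hfin : ∀ x, (children par x).Finite)
    (w : V → ℝ) : Prop where
  root_eq_one : w root = 1
  pos : ∀ x, 0 < w x
  eq_sum_children : ∀ x, w x = ∑ y ∈ (hfin x).toFinset, w y

theorem IsUnitFlow.le_par {root : V} {par : V → V} {hfin : ∀ x, (children par x).Finite}
    {w : V → ℝ} (hw : IsUnitFlow root par hfin w) {x : V} (hx : par x ≠ x) : w x ≤ w (par x) := by
  rw [hw.eq_sum_children (par x)]
  exact Finset.single_le_sum (fun y _ => (hw.pos y).le)
    ((hfin (par x)).mem_toFinset.2 ⟨rfl, fun h => hx h.symm⟩)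

theorem measure_branchEnds_eq_sum_children {root : V} {par : V → V} {depth : V → ℕ}
    (hT : IsTreeDepth root par depth) (μ : Measure (Ends root par)) {x : V}
    (hfin : (children par x).Finite) :
    μ (branchEnds root par x) = ∑ y ∈ hfin.toFinset, μ (branchEnds root par y) := by
  have hunion : branchEnds root par x = ⋃ y ∈ hfin.toFinset, branchEnds root par y := by
    simpa only [Set.Finite.mem_toFinset] using hT.branchEnds_eq_biUnion_children x
  rw [hunion]
  refine measure_biUnion_finset ?_ fun _ _ => MeasurableSpace.measurableSet_top
  rw [hfin.coe_toFinset]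
  exact hT.pairwiseDisjoint_branchEnds_children x

theorem isUnitFlow_branchEnds {root : V} {par : V → V} {depth : V → ℕ}
    (hT : IsTreeDepth root par depth) (hfin : ∀ x, (children par x).Finite)
    (μ : Measure (Ends root par)) [IsProbabilityMeasure μ]
    (hfull : ∀ x, μ (branchEnds root par x) ≠ 0) :
    IsUnitFlow root par hfin fun x => (μ (branchEnds root par x)).toReal where
  root_eq_one := by rw [branchEnds_root, measure_univ, ENNReal.toReal_one]
  pos x := ENNReal.toReal_pos (hfull x) (measure_ne_top μ _)
  eq_sum_children x := by
    rw [measure_branchEnds_eq_sum_children hT μ (hfin x),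
      ENNReal.toReal_sum fun y _ => measure_ne_top μ _]

end

/-- Since `par root = root`, at the root this also contains the root itself, where `Ft` vanishes. -/
noncomputable def neighborFinset (par : V → V) (hfin : ∀ x, (children par x).Finite) (x : V) :
    Finset V :=
  insert (par x) (hfin x).toFinset

section Reconstruction

variable {root : V} {par : V → V} {depth : V → ℕ} (hd : ∀ x, x ≠ root → depth (par x) < depth x)
  {φ μB : V → ℝ}

local notation "F̃ₒ" => Fo root par depth hd φ μB
local notation "F̃" => Ft root par depth hd φ μB

theorem Fo_root : F̃ₒ root = 1 := by
  rw [Fo, dif_pos rfl]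

theorem Fo_of_ne_root {x : V} (hx : x ≠ root) :
    F̃ₒ x = F̃ₒ (par x) * Fup root par depth hd φ μB x := by
  rw [Fo, dif_neg hx]
  rfl

omit [DecidableEq V] in
theorem Fdown_nonneg (hpos : ∀ x, 0 < φ x) (x : V) : 0 ≤ Fdown par φ x :=
  div_nonneg (hpos x).le (hpos (par x)).le

omit [DecidableEq V] in
theorem Fdown_lt_one (hpos : ∀ x, 0 < φ x) (hmono : ∀ x, x ≠ root → φ x < φ (par x)) {x : V}
    (hx : x ≠ root) : Fdown par φ x < 1 :=
  (div_lt_one (hpos (par x))).2 (hmono x hx)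

theorem Ft_par_left {x : V} (hx : par x ≠ x) : F̃ (par x) x = Fup root par depth hd φ μB x := by
  rw [Ft, if_pos ⟨rfl, hx.symm⟩]

theorem Ft_par_right (hT : IsTreeDepth root par depth) {x : V} (hx : par x ≠ x) :
    F̃ x (par x) = Fdown par φ x := by
  have hnot : ¬(par (par x) = x ∧ par x ≠ x) := hT.par_notMem_children x
  rw [Ft, if_neg hnot, if_pos ⟨rfl, hx.symm⟩]

theorem Ft_self (x : V) : F̃ x x = 0 := by
  simp [Ft]

theorem Ft_eq_zero_of_notMem {hfin : ∀ x, (children par x).Finite} {x y : V}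
    (hy : y ∉ neighborFinset par hfin x) : F̃ x y = 0 := by
  simp only [neighborFinset, Finset.mem_insert, Set.Finite.mem_toFinset, not_or] at hy
  have hnot : ¬(par y = x ∧ y ≠ x) := hy.2
  rw [Ft, if_neg hnot, if_neg fun h => hy.1 h.1.symm]

theorem tsum_pRec_eq {x : V} (t : Finset V) (ht : ∀ y ∉ t, F̃ x y = 0) :
    ∑' y, pRec root par depth hd φ μB x y =
      1 / (1 + ∑ y ∈ t, F̃ x y * F̃ y x / (1 - F̃ x y * F̃ y x)) *
        ∑ y ∈ t, F̃ x y / (1 - F̃ x y * F̃ y x) := by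
  simp only [pRec, Gtd]
  rw [tsum_mul_left, tsum_eq_sum fun y hy => by simp [ht y hy],
    tsum_eq_sum fun y hy => by simp [ht y hy]]

variable (hT : IsTreeDepth root par depth) {hfin : ∀ x, (children par x).Finite}
  (hw : IsUnitFlow root par hfin μB) (hpos : ∀ x, 0 < φ x)
  (hmono : ∀ x, x ≠ root → φ x < φ (par x))
include hT hw hpos hmono

theorem le_Fo (x : V) : μB x ≤ F̃ₒ x := by
  by_cases hx : x = root
  · rw [hx, Fo_root, hw.root_eq_one]
  have ih := le_Fo (par x)
  have hP : 0 < F̃ₒ (par x) := (hw.pos _).trans_le ih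
  have hm : μB x / F̃ₒ (par x) ≤ 1 :=
    (div_le_one hP).2 ((hw.le_par (hT.par_ne_self hx)).trans ih)
  have hD := one_sub_add_mul_pos (Fdown_nonneg hpos x) (Fdown_lt_one hpos hmono hx)
    (div_nonneg (hw.pos x).le hP.le)
  have hFo : F̃ₒ x = μB x / (1 - Fdown par φ x + Fdown par φ x * (μB x / F̃ₒ (par x))) := by
    rw [Fo_of_ne_root hd hx, Fup]
    field_simp
  rw [hFo]
  exact le_div_self (hw.pos x).le hD (one_sub_add_mul_le_one (Fdown_nonneg hpos x) hm)
termination_by depth x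
decreasing_by exact hd x hx

theorem Fo_pos (x : V) : 0 < F̃ₒ x :=
  (hw.pos x).trans_le (le_Fo hd hT hw hpos hmono x)

theorem div_Fo_nonneg (x y : V) : 0 ≤ μB x / F̃ₒ y :=
  div_nonneg (hw.pos x).le (Fo_pos hd hT hw hpos hmono y).le

theorem div_Fo_eq {x : V} (hx : x ≠ root) :
    μB x / F̃ₒ x = 1 - Fdown par φ x + Fdown par φ x * (μB x / F̃ₒ (par x)) := by
  have hP := Fo_pos hd hT hw hpos hmono (par x)
  have hD := one_sub_add_mul_pos (Fdown_nonneg hpos x) (Fdown_lt_one hpos hmono hx)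
    (div_Fo_nonneg hd hT hw hpos hmono x (par x))
  have hμ := (hw.pos x).ne'
  rw [Fo_of_ne_root hd hx, Fup]
  field_simp

theorem Ft_mul_Ft_par_mem_Ico {x : V} (hx : x ≠ root) :
    F̃ (par x) x * F̃ x (par x) ∈ Set.Ico 0 1 := by
  have ha₀ : 0 ≤ Fdown par φ x := Fdown_nonneg hpos x
  have ha₁ : Fdown par φ x < 1 := Fdown_lt_one hpos hmono hx
  have hm := div_Fo_nonneg hd hT hw hpos hmono x (par x)
  rw [Ft_par_left hd (hT.par_ne_self hx), Ft_par_right hd hT (hT.par_ne_self hx)]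
  exact ⟨mul_nonneg (div_nonneg hm (one_sub_add_mul_pos ha₀ ha₁ hm).le) ha₀,
    div_one_sub_add_mul_mul_lt_one ha₀ ha₁ hm⟩

theorem Ft_edge_term_from_par {x : V} (hx : x ≠ root) :
    F̃ (par x) x * (1 - F̃ x (par x)) / (1 - F̃ (par x) x * F̃ x (par x)) = μB x / F̃ₒ (par x) := by
  rw [Ft_par_left hd (hT.par_ne_self hx), Ft_par_right hd hT (hT.par_ne_self hx)]
  exact forward_edge_term_eq (Fdown_nonneg hpos x) (Fdown_lt_one hpos hmono hx)
    (div_Fo_nonneg hd hT hw hpos hmono x (par x))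

theorem Ft_edge_term_to_par {x : V} (hx : x ≠ root) :
    F̃ x (par x) * (1 - F̃ (par x) x) / (1 - F̃ x (par x) * F̃ (par x) x) =
      Fdown par φ x * (1 - μB x / F̃ₒ (par x)) := by
  rw [Ft_par_left hd (hT.par_ne_self hx), Ft_par_right hd hT (hT.par_ne_self hx)]
  exact backward_edge_term_eq (Fdown_nonneg hpos x) (Fdown_lt_one hpos hmono hx)
    (div_Fo_nonneg hd hT hw hpos hmono x (par x))

theorem Ft_mul_Ft_mem_Ico {x y : V} (hy : y ∈ neighborFinset par hfin x) :
    F̃ x y * F̃ y x ∈ Set.Ico 0 1 := by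
  rcases Finset.mem_insert.1 hy with rfl | hy
  · rcases eq_or_ne x root with rfl | hx
    · rw [hT.par_root, Ft_self]
      simp
    · rw [mul_comm]
      exact Ft_mul_Ft_par_mem_Ico hd hT hw hpos hmono hx
  · have hy := (hfin x).mem_toFinset.1 hy
    obtain rfl := hy.1
    exact Ft_mul_Ft_par_mem_Ico hd hT hw hpos hmono (hT.ne_root_of_mem_children hy)

theorem sum_edge_terms_eq_one (x : V) :
    ∑ y ∈ neighborFinset par hfin x, F̃ x y * (1 - F̃ y x) / (1 - F̃ x y * F̃ y x) = 1 := by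
  have hchildren : ∑ y ∈ (hfin x).toFinset, F̃ x y * (1 - F̃ y x) / (1 - F̃ x y * F̃ y x) =
      μB x / F̃ₒ x := by
    rw [hw.eq_sum_children x, Finset.sum_div]
    refine Finset.sum_congr rfl fun y hy => ?_
    have hy := (hfin x).mem_toFinset.1 hy
    obtain rfl := hy.1
    exact Ft_edge_term_from_par hd hT hw hpos hmono (hT.ne_root_of_mem_children hy)
  have hpar : par x ∉ (hfin x).toFinset := fun h =>
    hT.par_notMem_children x ((hfin x).mem_toFinset.1 h)
  rw [neighborFinset, Finset.sum_insert hpar, hchildren]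
  rcases eq_or_ne x root with rfl | hx
  · rw [hT.par_root, Ft_self, Fo_root, hw.root_eq_one]
    simp
  · rw [Ft_edge_term_to_par hd hT hw hpos hmono hx, div_Fo_eq hd hT hw hpos hmono hx]
    ring

end Reconstruction

theorem stmt_17_general (root : V) (par : V → V) (depth : V → ℕ)
    (hroot : par root = root) (hdepth0 : depth root = 0)
    (hdepth : ∀ x, x ≠ root → depth (par x) + 1 = depth x)
    (hlocfin : ∀ x : V, {y | par y = x ∧ y ≠ x}.Finite)
    (φ : V → ℝ) (hpos : ∀ x, 0 < φ x)
    (hmono : ∀ x, x ≠ root → φ x < φ (par x))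
    (μ : Measure (Ends root par)) [IsProbabilityMeasure μ]
    (hfull : ∀ x : V, μ (branchEnds root par x) ≠ 0)
    (μB : V → ℝ) (hμB : ∀ x, μB x = (μ (branchEnds root par x)).toReal)
    (hd : ∀ x, x ≠ root → depth (par x) < depth x) :
    ∀ x : V, ∑' y : V, pRec root par depth hd φ μB x y = 1 := by
  have hT : IsTreeDepth root par depth := ⟨hroot, hdepth0, hdepth⟩
  have hw : IsUnitFlow root par hlocfin μB :=
    funext hμB ▸ isUnitFlow_branchEnds hT hlocfin μ hfull
  intro x
  rw [tsum_pRec_eq hd (neighborFinset par hlocfin x) fun y => Ft_eq_zero_of_notMem hd]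
  exact sum_div_one_sub_mul_eq_one _ _ _
    (fun y hy => (Ft_mul_Ft_mem_Ico hd hT hw hpos hmono hy).1)
    (fun y hy => (Ft_mul_Ft_mem_Ico hd hT hw hpos hmono hy).2)
    (sum_edge_terms_eq_one hd hT hw hpos hmono x)

/-- Let `T` be a locally finite rooted tree with forward degrees `≥ 2`, `φ` an
ultrametric element on `T`, and `μ` a fully supported Borel probability measure on
`∂T`.  Then the transition matrix reconstructed from `φ` and `μ` via the recursion of
Theorem II is stochastic: `Σ_{y} p(x,y) = 1` for every `x`. -/
theorem stmt_17 (root : V) (par : V → V) (depth : V → ℕ)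
    (hroot : par root = root) (hdepth0 : depth root = 0)
    (hdepth : ∀ x, x ≠ root → depth (par x) + 1 = depth x)
    (hlocfin : ∀ x : V, {y | par y = x ∧ y ≠ x}.Finite)
    (hdeg : ∀ x : V, ∃ y z : V, y ≠ z ∧ par y = x ∧ par z = x ∧ y ≠ x ∧ z ≠ x)
    (φ : V → ℝ) (hpos : ∀ x, 0 < φ x)
    (hmono : ∀ x, x ≠ root → φ x < φ (par x))
    (hlim : ∀ ξ : Ends root par, Tendsto (fun n => φ (ξ.1 n)) atTop (nhds 0))
    (μ : Measure (Ends root par)) [IsProbabilityMeasure μ]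
    (hfull : ∀ x : V, μ (branchEnds root par x) ≠ 0)
    (μB : V → ℝ) (hμB : ∀ x, μB x = (μ (branchEnds root par x)).toReal)
    (hd : ∀ x, x ≠ root → depth (par x) < depth x) :
    ∀ x : V, ∑' y : V, pRec root par depth hd φ μB x y = 1 :=
  stmt_17_general root par depth hroot hdepth0 hdepth hlocfin φ hpos hmono μ hfull μB hμB hd
end

section
/- Let G̃ be the 'would-be' Green kernel constructed from an ultrametric element φ and fully supported measure μ on ∂T as in the reconstruction of Theorem II (via F̃ and G̃(x,x)), and let P be the associated stochastic transition matrix p(x,y) = F̃(x,y)/(G̃(x,x)(1 − F̃(x,y)F̃(y,x))). Then for any vertex x₀, the function g(x) = G̃(x,x₀) satisfies Pg = g − 𝟙_{x₀}, i.e. it is superharmonic with Laplacian equal to the negative point mass at x₀. -/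
open Filter MeasureTheory

variable {V : Type*} [DecidableEq V]

/-- `meetIdx x y` : number of upward steps from `x` to the confluent `x ∧ y`. -/
noncomputable def meetIdx (par : V → V) (x y : V) : ℕ :=
  sInf {k | ∃ j, par^[j] y = par^[k] x}

/-- The confluent (deepest common ancestor) of two vertices. -/
noncomputable def meet (par : V → V) (x y : V) : V := par^[meetIdx par x y] x

/-- `downIdx x y` : number of upward steps from `y` to the confluent `x ∧ y`. -/
noncomputable def downIdx (par : V → V) (x y : V) : ℕ :=
  sInf {j | par^[j] y = meet par x y}

/-- The 'would-be' hitting probabilities `F̃(x,y)` for arbitrary vertices, extended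
multiplicatively along the geodesic from `x` to `y` (up from `x` to `x ∧ y`, then down
to `y`). -/
noncomputable def Ftgen (root : V) (par : V → V) (depth : V → ℕ)
    (hd : ∀ x, x ≠ root → depth (par x) < depth x)
    (φ : V → ℝ) (μB : V → ℝ) (x y : V) : ℝ :=
  (∏ i ∈ Finset.range (meetIdx par x y), Fdown par φ (par^[i] x)) *
    (∏ i ∈ Finset.range (downIdx par x y), Fup root par depth hd φ μB (par^[i] y))

/-- The 'would-be' Green kernel `G̃(x,y) = F̃(x,y)·G̃(y,y)`. -/
noncomputable def Gt (root : V) (par : V → V) (depth : V → ℕ)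
    (hd : ∀ x, x ≠ root → depth (par x) < depth x)
    (φ : V → ℝ) (μB : V → ℝ) (x y : V) : ℝ :=
  Ftgen root par depth hd φ μB x y * Gtd root par depth hd φ μB y

set_option linter.unusedSectionVars false

section TreeAux

variable {V : Type*} [DecidableEq V] (root : V) (par : V → V) (depth : V → ℕ)

lemma iter_root' (hroot : par root = root) (k : ℕ) : par^[k] root = root :=
  Function.iterate_fixed hroot k

lemma depth_zero_root (hdepth : ∀ x, x ≠ root → depth (par x) + 1 = depth x) :
    ∀ x : V, depth x = 0 → x = root := by
  intro x hx
  by_contra h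
  have := hdepth x h
  omega

lemma depth_iter' (hdepth0 : depth root = 0)
    (hdepth : ∀ x, x ≠ root → depth (par x) + 1 = depth x) :
    ∀ j x, j ≤ depth x → depth (par^[j] x) + j = depth x := by
  intro j
  induction j with
  | zero => simp
  | succ n ih =>
    intro x hx
    have h1 := ih x (by omega)
    have hne : par^[n] x ≠ root := by
      intro h; rw [h, hdepth0] at h1; omega
    have h2 := hdepth _ hne
    rw [Function.iterate_succ_apply']
    omega

lemma iter_depth_root (hroot : par root = root)
    (hdepth : ∀ x, x ≠ root → depth (par x) + 1 = depth x) :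
    ∀ x : V, par^[depth x] x = root := by
  suffices h : ∀ n (x : V), depth x = n → par^[n] x = root by intro x; exact h _ x rfl
  intro n
  induction n using Nat.strong_induction_on with
  | _ n ih =>
    intro x hx
    by_cases hr : x = root
    · rw [hr]; exact iter_root' root par hroot n
    · have h1 := hdepth x hr
      obtain ⟨m, rfl⟩ : ∃ m, n = m + 1 := ⟨depth (par x), by omega⟩
      rw [Function.iterate_succ_apply]
      exact ih m (by omega) (par x) (by omega)

lemma iter_eq_root_iff (hroot : par root = root) (hdepth0 : depth root = 0)
    (hdepth : ∀ x, x ≠ root → depth (par x) + 1 = depth x) :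
    ∀ (j : ℕ) (x : V), par^[j] x = root ↔ depth x ≤ j := by
  intro j x
  constructor
  · intro h
    by_contra hlt
    push_neg at hlt
    have h1 := depth_iter' root par depth hdepth0 hdepth j x (le_of_lt hlt)
    rw [h, hdepth0] at h1
    omega
  · intro h
    have hj : j = (j - depth x) + depth x := by omega
    rw [hj, Function.iterate_add_apply, iter_depth_root root par depth hroot hdepth x,
      iter_root' root par hroot]

lemma iter_inj (hdepth0 : depth root = 0)
    (hdepth : ∀ x, x ≠ root → depth (par x) + 1 = depth x) :
    ∀ (j k : ℕ) (x : V), j ≤ depth x → k ≤ depth x →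
    par^[j] x = par^[k] x → j = k := by
  intro j k x hj hk h
  have h1 := depth_iter' root par depth hdepth0 hdepth j x hj
  have h2 := depth_iter' root par depth hdepth0 hdepth k x hk
  rw [h] at h1
  omega

lemma no2cycle (hroot : par root = root) (hdepth0 : depth root = 0)
    (hdepth : ∀ x, x ≠ root → depth (par x) + 1 = depth x)
    (a b : V) (h1 : par a = b) (h2 : a ≠ b) : par b ≠ a := by
  intro h3
  have ha : a ≠ root := by
    intro h; apply h2; rw [h] at h1 ⊢; rw [← h1, hroot]
  have hb : b ≠ root := by
    intro h; apply ha; rw [h] at h3; rw [← h3, hroot]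
  have := hdepth a ha
  have := hdepth b hb
  rw [h1] at *
  rw [h3] at *
  omega

lemma par_ne_self (hdepth : ∀ x, x ≠ root → depth (par x) + 1 = depth x)
    (x : V) (hx : x ≠ root) : par x ≠ x := by
  intro h
  have := hdepth x hx
  rw [h] at this
  omega

end TreeAux
section MeetAux

variable {V : Type*} [DecidableEq V] (root : V) (par : V → V) (depth : V → ℕ)
variable (hroot : par root = root) (hdepth0 : depth root = 0)
  (hdepth : ∀ x, x ≠ root → depth (par x) + 1 = depth x)

include hroot hdepth0 hdepth

lemma meet_spec (x y : V) :
    (∃ j, par^[j] y = par^[meetIdx par x y] x) ∧ meetIdx par x y ≤ depth x := by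
  have hmem : depth x ∈ {k | ∃ j, par^[j] y = par^[k] x} :=
    ⟨depth y, by rw [iter_depth_root root par depth hroot hdepth,
      iter_depth_root root par depth hroot hdepth]⟩
  exact ⟨Nat.sInf_mem ⟨_, hmem⟩, Nat.sInf_le hmem⟩

lemma downIdx_spec (x y : V) :
    par^[downIdx par x y] y = meet par x y ∧ downIdx par x y ≤ depth y := by
  obtain ⟨⟨j, hj⟩, -⟩ := meet_spec root par depth hroot hdepth0 hdepth x y
  have hj' : par^[j] y = meet par x y := hj
  have hne : Set.Nonempty {j | par^[j] y = meet par x y} := ⟨j, hj'⟩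
  refine ⟨Nat.sInf_mem hne, ?_⟩
  by_cases hjle : j ≤ depth y
  · exact le_trans (Nat.sInf_le hj') hjle
  · have hm : meet par x y = root := by
      rw [← hj']
      exact (iter_eq_root_iff root par depth hroot hdepth0 hdepth j y).mpr (by omega)
    have : par^[depth y] y = meet par x y := by
      rw [hm]; exact iter_depth_root root par depth hroot hdepth y
    exact Nat.sInf_le this

lemma meet_self (x : V) : meetIdx par x x = 0 ∧ meet par x x = x ∧ downIdx par x x = 0 := by
  have h0 : meetIdx par x x = 0 :=
    Nat.sInf_eq_zero.mpr (Or.inl ⟨0, rfl⟩)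
  have hm : meet par x x = x := by rw [meet, h0]; rfl
  refine ⟨h0, hm, Nat.sInf_eq_zero.mpr (Or.inl ?_)⟩
  show par^[0] x = meet par x x
  rw [hm]; rfl

/-- parent step, when `x` is an ancestor of `x₀`. -/
lemma anc_parent (x x₀ : V) (hx : x ≠ root) (hm : meetIdx par x x₀ = 0) :
    meetIdx par (par x) x₀ = 0 ∧ meet par (par x) x₀ = par x ∧
      downIdx par (par x) x₀ = downIdx par x x₀ + 1 := by
  set d := downIdx par x x₀ with hdd
  have hmeet : meet par x x₀ = x := by rw [meet, hm]; rfl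
  have hdx : par^[d] x₀ = x := by
    have := (downIdx_spec root par depth hroot hdepth0 hdepth x x₀).1
    rwa [hmeet] at this
  have hdlt : d < depth x₀ := by
    by_contra h
    exact hx (hdx ▸ (iter_eq_root_iff root par depth hroot hdepth0 hdepth d x₀).mpr (by omega))
  have hd1 : par^[d+1] x₀ = par x := by rw [Function.iterate_succ_apply', hdx]
  have hm' : meetIdx par (par x) x₀ = 0 :=
    Nat.sInf_eq_zero.mpr (Or.inl ⟨d+1, hd1⟩)
  have hmeet' : meet par (par x) x₀ = par x := by rw [meet, hm']; rfl
  refine ⟨hm', hmeet', ?_⟩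
  have hmem : par^[d+1] x₀ = meet par (par x) x₀ := by rw [hmeet']; exact hd1
  refine le_antisymm (Nat.sInf_le hmem) ?_
  by_contra hlt
  push_neg at hlt
  have hj : par^[downIdx par (par x) x₀] x₀ = meet par (par x) x₀ :=
    (downIdx_spec root par depth hroot hdepth0 hdepth (par x) x₀).1
  have hj2 : par^[downIdx par (par x) x₀] x₀ = par^[d+1] x₀ :=
    hj.trans (hmeet'.trans hd1.symm)
  have := iter_inj root par depth hdepth0 hdepth _ (d+1) x₀ (by omega) (by omega) hj2
  omega

/-- parent step, when `x` is not an ancestor of `x₀`. -/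
lemma nonanc_parent (x x₀ : V) (hm : meetIdx par x x₀ ≠ 0) :
    x ≠ root ∧ meetIdx par (par x) x₀ + 1 = meetIdx par x x₀ ∧
      meet par (par x) x₀ = meet par x x₀ ∧ downIdx par (par x) x₀ = downIdx par x x₀ := by
  have hx : x ≠ root := by
    intro h
    apply hm
    apply Nat.sInf_eq_zero.mpr (Or.inl ?_)
    exact ⟨depth x₀, by
      rw [iter_depth_root root par depth hroot hdepth x₀, h]; rfl⟩
  obtain ⟨m', hm'⟩ : ∃ m', meetIdx par x x₀ = m' + 1 :=
    ⟨meetIdx par x x₀ - 1, by omega⟩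
  have hrel : ∀ k, par^[k] (par x) = par^[k+1] x := by
    intro k; rw [Function.iterate_succ_apply]
  have hmem : m' ∈ {k | ∃ j, par^[j] x₀ = par^[k] (par x)} := by
    obtain ⟨⟨j, hj⟩, -⟩ := meet_spec root par depth hroot hdepth0 hdepth x x₀
    exact ⟨j, by rw [hrel m', ← hm']; exact hj⟩
  have hidx : meetIdx par (par x) x₀ = m' := by
    refine le_antisymm (Nat.sInf_le hmem) ?_
    by_contra hlt
    push_neg at hlt
    have hj := Nat.sInf_mem (⟨m', hmem⟩ : Set.Nonempty {k | ∃ j, par^[j] x₀ = par^[k] (par x)})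
    obtain ⟨j, hj⟩ := hj
    rw [hrel] at hj
    have : meetIdx par x x₀ ≤ meetIdx par (par x) x₀ + 1 := Nat.sInf_le ⟨j, hj⟩
    omega
  have hmeet : meet par (par x) x₀ = meet par x x₀ := by
    rw [meet, meet, hidx, hm', hrel]
  refine ⟨hx, by omega, hmeet, ?_⟩
  rw [downIdx, downIdx, hmeet]

/-- the child of `x` towards `x₀`, when `x` is a strict ancestor of `x₀`. -/
lemma special_child (x x₀ : V) (hm : meetIdx par x x₀ = 0) (e : ℕ)
    (hde : downIdx par x x₀ = e + 1) :
    par (par^[e] x₀) = x ∧ par^[e] x₀ ≠ x ∧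
      meetIdx par (par^[e] x₀) x₀ = 0 ∧ meet par (par^[e] x₀) x₀ = par^[e] x₀ ∧
      downIdx par (par^[e] x₀) x₀ = e := by
  have hmeet : meet par x x₀ = x := by rw [meet, hm]; rfl
  have hdx : par^[e+1] x₀ = x := by
    have := (downIdx_spec root par depth hroot hdepth0 hdepth x x₀).1
    rwa [hmeet, hde] at this
  have hpw : par (par^[e] x₀) = x := by
    rw [← hdx, Function.iterate_succ_apply']
  have hwx : par^[e] x₀ ≠ x := by
    intro h
    have : downIdx par x x₀ ≤ e := Nat.sInf_le (by rw [Set.mem_setOf_eq, hmeet]; exact h)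
    omega
  have hm0 : meetIdx par (par^[e] x₀) x₀ = 0 :=
    Nat.sInf_eq_zero.mpr (Or.inl ⟨e, rfl⟩)
  have hmeet0 : meet par (par^[e] x₀) x₀ = par^[e] x₀ := by rw [meet, hm0]; rfl
  refine ⟨hpw, hwx, hm0, hmeet0, ?_⟩
  have hmem : par^[e] x₀ = meet par (par^[e] x₀) x₀ := by rw [hmeet0]
  refine le_antisymm (Nat.sInf_le hmem) ?_
  by_contra hlt
  push_neg at hlt
  have hj : par^[downIdx par (par^[e] x₀) x₀] x₀ = meet par (par^[e] x₀) x₀ :=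
    Nat.sInf_mem (⟨e, hmem⟩ : Set.Nonempty {j | par^[j] x₀ = meet par (par^[e] x₀) x₀})
  set j := downIdx par (par^[e] x₀) x₀ with hjdef
  have hj' : par^[j] x₀ = par^[e] x₀ := hj.trans hmeet0
  have hjx : par^[j+1] x₀ = x := by
    rw [Function.iterate_succ_apply', hj', hpw]
  have : downIdx par x x₀ ≤ j + 1 := Nat.sInf_le (by rw [Set.mem_setOf_eq, hmeet]; exact hjx)
  omega

/-- child step, when `y` is not an ancestor of `x₀`. -/
lemma child_step (x x₀ y : V) (hpy : par y = x) (hyx : y ≠ x)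
    (hnanc : ∀ j, par^[j] x₀ ≠ y) :
    meetIdx par y x₀ = meetIdx par x x₀ + 1 ∧ meet par y x₀ = meet par x x₀ ∧
      downIdx par y x₀ = downIdx par x x₀ := by
  set m := meetIdx par x x₀ with hmm
  have hrel : ∀ k, par^[k+1] y = par^[k] x := by
    intro k; rw [Function.iterate_succ_apply, hpy]
  have hmem : m + 1 ∈ {k | ∃ j, par^[j] x₀ = par^[k] y} := by
    obtain ⟨⟨j, hj⟩, -⟩ := meet_spec root par depth hroot hdepth0 hdepth x x₀
    exact ⟨j, by rw [hrel m]; exact hj⟩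
  have hidx : meetIdx par y x₀ = m + 1 := by
    refine le_antisymm (Nat.sInf_le hmem) ?_
    by_contra hlt
    push_neg at hlt
    have hj : ∃ j, par^[j] x₀ = par^[meetIdx par y x₀] y :=
      Nat.sInf_mem (⟨m+1, hmem⟩ : Set.Nonempty {k | ∃ j, par^[j] x₀ = par^[k] y})
    obtain ⟨j, hj⟩ := hj
    by_cases h0 : meetIdx par y x₀ = 0
    · rw [h0] at hj; exact hnanc j hj
    · obtain ⟨m2, hm2⟩ : ∃ m2, meetIdx par y x₀ = m2 + 1 := ⟨meetIdx par y x₀ - 1, by omega⟩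
      rw [hm2, hrel] at hj
      have : m ≤ m2 := Nat.sInf_le ⟨j, hj⟩
      omega
  have hmeet : meet par y x₀ = meet par x x₀ := by
    rw [meet, meet, hidx, hrel]
  refine ⟨hidx, hmeet, ?_⟩
  rw [downIdx, downIdx, hmeet]

/-- a child of `x` other than the one towards `x₀` is not an ancestor of `x₀`
(ancestor-of case). -/
lemma child_not_anc (x x₀ y : V) (hm : meetIdx par x x₀ = 0) (hpy : par y = x)
    (hyx : y ≠ x) (hw : ∀ e, downIdx par x x₀ = e + 1 → y ≠ par^[e] x₀) :
    ∀ j, par^[j] x₀ ≠ y := by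
  intro j hj
  have hyroot : y ≠ root := by
    intro h; apply hyx; rw [h] at hpy ⊢; rw [← hpy, hroot]
  have hjlt : j < depth x₀ := by
    by_contra h
    rw [(iter_eq_root_iff root par depth hroot hdepth0 hdepth j x₀).mpr (by omega)] at hj
    exact hyroot hj.symm
  have hmeet : meet par x x₀ = x := by rw [meet, hm]; rfl
  set d := downIdx par x x₀ with hdd
  have hdx : par^[d] x₀ = x := by
    have := (downIdx_spec root par depth hroot hdepth0 hdepth x x₀).1
    rwa [hmeet] at this
  have hdle : d ≤ depth x₀ := (downIdx_spec root par depth hroot hdepth0 hdepth x x₀).2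
  have hj1 : par^[j+1] x₀ = par^[d] x₀ := by
    rw [Function.iterate_succ_apply', hj, hpy, hdx]
  have hjd := iter_inj root par depth hdepth0 hdepth (j+1) d x₀ (by omega) hdle hj1
  have := hw j (by omega)
  exact this hj.symm

/-- children are not ancestors of `x₀` (non-ancestor case). -/
lemma child_not_anc' (x x₀ y : V) (hm : meetIdx par x x₀ ≠ 0) (hpy : par y = x) :
    ∀ j, par^[j] x₀ ≠ y := by
  intro j hj
  apply hm
  apply Nat.sInf_eq_zero.mpr (Or.inl ?_)
  exact ⟨j + 1, by rw [Function.iterate_succ_apply', hj, hpy]; rfl⟩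

end MeetAux
section PosAux

variable {V : Type*} [DecidableEq V] (root : V) (par : V → V) (depth : V → ℕ)
  (hd : ∀ x, x ≠ root → depth (par x) < depth x) (φ : V → ℝ) (μB : V → ℝ)
variable (hroot : par root = root) (hdepth0 : depth root = 0)
  (hdepth : ∀ x, x ≠ root → depth (par x) + 1 = depth x)
  (hpos : ∀ x, 0 < φ x) (hmono : ∀ x, x ≠ root → φ x < φ (par x))
  (hμBpos : ∀ x, 0 < μB x)

include hpos hmono in
lemma Fdown_bounds (x : V) (hx : x ≠ root) :
    0 < Fdown par φ x ∧ Fdown par φ x < 1 :=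
  ⟨div_pos (hpos x) (hpos _), (div_lt_one (hpos _)).mpr (hmono x hx)⟩

include hpos hmono hμBpos in
lemma Fo_pos_s18 : ∀ x : V, 0 < Fo root par depth hd φ μB x := by
  suffices h : ∀ n (x : V), depth x = n → 0 < Fo root par depth hd φ μB x from
    fun x => h _ x rfl
  intro n
  induction n using Nat.strong_induction_on with
  | _ n ih =>
    intro x hx
    rw [Fo]
    by_cases hr : x = root
    · simp [hr]
    · rw [dif_neg hr]
      have hpar : 0 < Fo root par depth hd φ μB (par x) :=
        ih (depth (par x)) (hx ▸ hd x hr) (par x) rfl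
      have ht : 0 < μB x / Fo root par depth hd φ μB (par x) := div_pos (hμBpos x) hpar
      obtain ⟨hβ0, hβ1⟩ := Fdown_bounds root par φ hpos hmono x hr
      have hden : 0 < 1 - Fdown par φ x +
          Fdown par φ x * (μB x / Fo root par depth hd φ μB (par x)) := by nlinarith
      exact mul_pos hpar (div_pos ht hden)

include hpos hmono hμBpos in
lemma Fup_pos_lt (x : V) (hx : x ≠ root) :
    0 < Fup root par depth hd φ μB x ∧
      Fdown par φ x * Fup root par depth hd φ μB x < 1 := by
  have hpar : 0 < Fo root par depth hd φ μB (par x) :=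
    Fo_pos_s18 root par depth hd φ μB hpos hmono hμBpos (par x)
  have ht : 0 < μB x / Fo root par depth hd φ μB (par x) := div_pos (hμBpos x) hpar
  obtain ⟨hβ0, hβ1⟩ := Fdown_bounds root par φ hpos hmono x hx
  set t := μB x / Fo root par depth hd φ μB (par x)
  set β := Fdown par φ x
  have hden : 0 < 1 - β + β * t := by nlinarith
  rw [Fup]
  constructor
  · exact div_pos ht hden
  · rw [mul_div_assoc', div_lt_one hden]
    linarith

include hroot hdepth0 hdepth hpos hmono hμBpos in
lemma Ftgen_pos (x y : V) : 0 < Ftgen root par depth hd φ μB x y := by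
  rw [Ftgen]
  apply mul_pos
  · apply Finset.prod_pos
    intro i hi
    rw [Finset.mem_range] at hi
    have hle : meetIdx par x y ≤ depth x :=
      (meet_spec root par depth hroot hdepth0 hdepth x y).2
    have hne : par^[i] x ≠ root := by
      intro h
      have := (iter_eq_root_iff root par depth hroot hdepth0 hdepth i x).mp h
      omega
    exact (Fdown_bounds root par φ hpos hmono _ hne).1
  · apply Finset.prod_pos
    intro i hi
    rw [Finset.mem_range] at hi
    have hle : downIdx par x y ≤ depth y :=
      (downIdx_spec root par depth hroot hdepth0 hdepth x y).2
    have hne : par^[i] y ≠ root := by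
      intro h
      have := (iter_eq_root_iff root par depth hroot hdepth0 hdepth i y).mp h
      omega
    exact (Fup_pos_lt root par depth hd φ μB hpos hmono hμBpos _ hne).1

include hroot hdepth0 hdepth in
lemma Ft_cases (x y : V) (h : Ft root par depth hd φ μB x y ≠ 0) :
    (par y = x ∧ y ≠ x) ∨ (par x = y ∧ x ≠ y) := by
  rw [Ft] at h
  split_ifs at h with h1 h2
  · exact Or.inl h1
  · exact Or.inr h2
  · exact absurd rfl h

include hroot hdepth0 hdepth in
lemma Ft_child (x y : V) (hpy : par y = x) (hyx : y ≠ x) :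
    Ft root par depth hd φ μB x y = Fup root par depth hd φ μB y ∧
      Ft root par depth hd φ μB y x = Fdown par φ y := by
  have hnc : par x ≠ y := no2cycle root par depth hroot hdepth0 hdepth y x hpy hyx
  constructor
  · rw [Ft, if_pos ⟨hpy, hyx⟩]
  · rw [Ft, if_neg (fun h => hnc h.1), if_pos ⟨hpy, hyx⟩]

include hroot hdepth0 hdepth in
lemma Ft_parent (x : V) (hx : x ≠ root) :
    Ft root par depth hd φ μB x (par x) = Fdown par φ x ∧
      Ft root par depth hd φ μB (par x) x = Fup root par depth hd φ μB x := by
  have hxp : x ≠ par x := (par_ne_self root par depth hdepth x hx).symm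
  have hnc : ¬ (par (par x) = x ∧ par x ≠ x) := by
    rintro ⟨h1, h2⟩
    exact no2cycle root par depth hroot hdepth0 hdepth (par x) x h1 h2 rfl
  constructor
  · rw [Ft, if_neg hnc, if_pos ⟨rfl, hxp⟩]
  · rw [Ft, if_pos ⟨rfl, hxp⟩]

include hroot hdepth0 hdepth hpos hmono hμBpos in
lemma q_bounds (x y : V) :
    0 ≤ Ft root par depth hd φ μB x y * Ft root par depth hd φ μB y x ∧
      Ft root par depth hd φ μB x y * Ft root par depth hd φ μB y x < 1 := by
  by_cases h1 : par y = x ∧ y ≠ x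
  · obtain ⟨ha, hb⟩ := Ft_child root par depth hd φ μB hroot hdepth0 hdepth x y h1.1 h1.2
    rw [ha, hb]
    have hyroot : y ≠ root := by
      intro h; apply h1.2; rw [h] at h1 ⊢; rw [← h1.1, hroot]
    obtain ⟨hu, huv⟩ := Fup_pos_lt root par depth hd φ μB hpos hmono hμBpos y hyroot
    obtain ⟨hβ0, hβ1⟩ := Fdown_bounds root par φ hpos hmono y hyroot
    exact ⟨le_of_lt (mul_pos hu hβ0), by rw [mul_comm]; exact huv⟩
  · by_cases h2 : par x = y ∧ x ≠ y
    · have hxroot : x ≠ root := by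
        intro h; apply h2.2; rw [h] at h2 ⊢; rw [← h2.1, hroot]
      obtain ⟨ha, hb⟩ := Ft_parent root par depth hd φ μB hroot hdepth0 hdepth x hxroot
      rw [← h2.1, ha, hb]
      obtain ⟨hu, huv⟩ := Fup_pos_lt root par depth hd φ μB hpos hmono hμBpos x hxroot
      obtain ⟨hβ0, hβ1⟩ := Fdown_bounds root par φ hpos hmono x hxroot
      exact ⟨le_of_lt (mul_pos hβ0 hu), huv⟩
    · rw [Ft, if_neg h1, if_neg h2]
      norm_num

end PosAux
section FtgenAux

variable {V : Type*} [DecidableEq V] (root : V) (par : V → V) (depth : V → ℕ)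
  (hd : ∀ x, x ≠ root → depth (par x) < depth x) (φ : V → ℝ) (μB : V → ℝ)
variable (hroot : par root = root) (hdepth0 : depth root = 0)
  (hdepth : ∀ x, x ≠ root → depth (par x) + 1 = depth x)

include hroot hdepth0 hdepth

lemma Ftgen_self (x : V) : Ftgen root par depth hd φ μB x x = 1 := by
  obtain ⟨h1, h2, h3⟩ := meet_self root par depth hroot hdepth0 hdepth x
  rw [Ftgen, h1, h3]
  simp

/-- `F̃(x⁻, x₀) = F̃(x⁻,x)·F̃(x,x₀)` when `x` is an ancestor of `x₀`. -/
lemma Ftgen_anc_parent (x x₀ : V) (hx : x ≠ root) (hm : meetIdx par x x₀ = 0) :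
    Ftgen root par depth hd φ μB (par x) x₀ =
      Fup root par depth hd φ μB x * Ftgen root par depth hd φ μB x x₀ := by
  obtain ⟨h1, h2, h3⟩ := anc_parent root par depth hroot hdepth0 hdepth x x₀ hx hm
  have hmeet : meet par x x₀ = x := by rw [meet, hm]; rfl
  have hdx : par^[downIdx par x x₀] x₀ = x := by
    have := (downIdx_spec root par depth hroot hdepth0 hdepth x x₀).1
    rwa [hmeet] at this
  rw [Ftgen, Ftgen, h1, h3, hm]
  simp only [Finset.range_zero, Finset.prod_empty, one_mul]
  rw [Finset.prod_range_succ, hdx]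
  ring

/-- `F̃(x, x₀) = F̃(x,x⁻)·F̃(x⁻,x₀)` when `x` is not an ancestor of `x₀`. -/
lemma Ftgen_nonanc_parent (x x₀ : V) (hm : meetIdx par x x₀ ≠ 0) :
    Ftgen root par depth hd φ μB x x₀ =
      Fdown par φ x * Ftgen root par depth hd φ μB (par x) x₀ := by
  obtain ⟨hx, h1, h2, h3⟩ := nonanc_parent root par depth hroot hdepth0 hdepth x x₀ hm
  rw [Ftgen, Ftgen, h3, ← h1]
  rw [Finset.prod_range_succ']
  simp only [Function.iterate_succ_apply, Function.iterate_zero_apply]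
  ring

/-- `F̃(y, x₀) = F̃(y,x)·F̃(x,x₀)` for a child `y` of `x` not an ancestor of `x₀`. -/
lemma Ftgen_child (x x₀ y : V) (hpy : par y = x) (hyx : y ≠ x)
    (hnanc : ∀ j, par^[j] x₀ ≠ y) :
    Ftgen root par depth hd φ μB y x₀ =
      Fdown par φ y * Ftgen root par depth hd φ μB x x₀ := by
  obtain ⟨h1, h2, h3⟩ := child_step root par depth hroot hdepth0 hdepth x x₀ y hpy hyx hnanc
  rw [Ftgen, Ftgen, h1, h3]
  rw [Finset.prod_range_succ']
  simp only [Function.iterate_succ_apply, Function.iterate_zero_apply, hpy]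
  ring

/-- `F̃(x, x₀) = F̃(x,w)·F̃(w,x₀)` for the child `w` of `x` towards `x₀`. -/
lemma Ftgen_special (x x₀ : V) (hm : meetIdx par x x₀ = 0) (e : ℕ)
    (hde : downIdx par x x₀ = e + 1) :
    Ftgen root par depth hd φ μB x x₀ =
      Fup root par depth hd φ μB (par^[e] x₀) *
        Ftgen root par depth hd φ μB (par^[e] x₀) x₀ := by
  obtain ⟨hpw, hwx, h1, h2, h3⟩ :=
    special_child root par depth hroot hdepth0 hdepth x x₀ hm e hde
  rw [Ftgen, Ftgen, hm, hde, h1, h3]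
  simp only [Finset.range_zero, Finset.prod_empty, one_mul]
  rw [Finset.prod_range_succ]
  ring

end FtgenAux

section GtdAux

variable {V : Type*} [DecidableEq V] (root : V) (par : V → V) (depth : V → ℕ)
  (hd : ∀ x, x ≠ root → depth (par x) < depth x) (φ : V → ℝ) (μB : V → ℝ)
variable (hroot : par root = root) (hdepth0 : depth root = 0)
  (hdepth : ∀ x, x ≠ root → depth (par x) + 1 = depth x)
  (hpos : ∀ x, 0 < φ x) (hmono : ∀ x, x ≠ root → φ x < φ (par x))
  (hμBpos : ∀ x, 0 < μB x)
  (hlocfin : ∀ x : V, {y | par y = x ∧ y ≠ x}.Finite)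

include hlocfin in
lemma Ft_eq_zero_of_notMem_s18 (x y : V)
    (hy : y ∉ (hlocfin x).toFinset ∪ {par x}) : Ft root par depth hd φ μB x y = 0 := by
  rw [Finset.mem_union, Set.Finite.mem_toFinset, Set.mem_setOf_eq, Finset.mem_singleton] at hy
  push_neg at hy
  rw [Ft, if_neg (fun h : par y = x ∧ y ≠ x => h.2 (hy.1 h.1)),
    if_neg (fun h : par x = y ∧ x ≠ y => hy.2 h.1.symm)]

include hlocfin in
lemma Gtd_eq_sum (x : V) :
    Gtd root par depth hd φ μB x = 1 + ∑ y ∈ (hlocfin x).toFinset ∪ {par x},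
      Ft root par depth hd φ μB x y * Ft root par depth hd φ μB y x /
        (1 - Ft root par depth hd φ μB x y * Ft root par depth hd φ μB y x) := by
  rw [Gtd]
  congr 1
  apply tsum_eq_sum
  intro y hy
  rw [Ft_eq_zero_of_notMem_s18 root par depth hd φ μB hlocfin x y hy]
  simp

include hroot hdepth0 hdepth hpos hmono hμBpos hlocfin in
lemma Gtd_ge_one (x : V) : 1 ≤ Gtd root par depth hd φ μB x := by
  rw [Gtd_eq_sum root par depth hd φ μB hlocfin x]
  have : 0 ≤ ∑ y ∈ (hlocfin x).toFinset ∪ {par x},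
      Ft root par depth hd φ μB x y * Ft root par depth hd φ μB y x /
        (1 - Ft root par depth hd φ μB x y * Ft root par depth hd φ μB y x) := by
    apply Finset.sum_nonneg
    intro y _
    obtain ⟨hq0, hq1⟩ := q_bounds root par depth hd φ μB hroot hdepth0 hdepth
      hpos hmono hμBpos x y
    exact div_nonneg hq0 (by linarith)
  linarith

end GtdAux
/-- Let `G̃` be the 'would-be' Green kernel constructed from an ultrametric element `φ`
and a fully supported probability measure `μ` on `∂T` as in the reconstruction of
Theorem II, and let `P` be the associated stochastic transition matrix
`p(x,y) = F̃(x,y)/(G̃(x,x)(1 − F̃(x,y)F̃(y,x)))`.  Then for any vertex `x₀`, the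
function `g(x) = G̃(x,x₀)` satisfies `Pg = g − 1_{x₀}`, i.e. it is superharmonic with
Laplacian equal to the negative point mass at `x₀`. -/
theorem stmt_18 (root : V) (par : V → V) (depth : V → ℕ)
    (hroot : par root = root) (hdepth0 : depth root = 0)
    (hdepth : ∀ x, x ≠ root → depth (par x) + 1 = depth x)
    (hlocfin : ∀ x : V, {y | par y = x ∧ y ≠ x}.Finite)
    (hdeg : ∀ x : V, ∃ y z : V, y ≠ z ∧ par y = x ∧ par z = x ∧ y ≠ x ∧ z ≠ x)
    (φ : V → ℝ) (hpos : ∀ x, 0 < φ x)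
    (hmono : ∀ x, x ≠ root → φ x < φ (par x))
    (hlim : ∀ ξ : Ends root par, Tendsto (fun n => φ (ξ.1 n)) atTop (nhds 0))
    (μ : Measure (Ends root par)) [IsProbabilityMeasure μ]
    (hfull : ∀ x : V, μ (branchEnds root par x) ≠ 0)
    (μB : V → ℝ) (hμB : ∀ x, μB x = (μ (branchEnds root par x)).toReal)
    (hd : ∀ x, x ≠ root → depth (par x) < depth x) :
    ∀ x₀ x : V,
      ∑' y : V, pRec root par depth hd φ μB x y * Gt root par depth hd φ μB y x₀
        = Gt root par depth hd φ μB x x₀ - (if x = x₀ then 1 else 0) := by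
  intro x₀ x
  have hμBpos : ∀ z, 0 < μB z := fun z => by
    rw [hμB]; exact ENNReal.toReal_pos (hfull z) (measure_ne_top μ _)
  have hGx1 : 1 ≤ Gtd root par depth hd φ μB x :=
    Gtd_ge_one root par depth hd φ μB hroot hdepth0 hdepth hpos hmono hμBpos hlocfin x
  have hGx0 : Gtd root par depth hd φ μB x ≠ 0 := by linarith
  set s : Finset V := (hlocfin x).toFinset ∪ {par x} with hs
  have hqb : ∀ y : V, 0 ≤ Ft root par depth hd φ μB x y * Ft root par depth hd φ μB y x ∧
      Ft root par depth hd φ μB x y * Ft root par depth hd φ μB y x < 1 := fun y =>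
    q_bounds root par depth hd φ μB hroot hdepth0 hdepth hpos hmono hμBpos x y
  have hsum : (∑' y, pRec root par depth hd φ μB x y * Gt root par depth hd φ μB y x₀)
      = ∑ y ∈ s, pRec root par depth hd φ μB x y * Gt root par depth hd φ μB y x₀ := by
    apply tsum_eq_sum
    intro y hy
    rw [pRec, Ft_eq_zero_of_notMem_s18 root par depth hd φ μB hlocfin x y hy]
    simp
  rw [hsum]
  have hGtd_sum := Gtd_eq_sum root par depth hd φ μB hlocfin x
  by_cases hxx : x = x₀
  · -- x = x₀
    subst hxx
    rw [if_pos rfl]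
    have hterm : ∀ y ∈ s, pRec root par depth hd φ μB x y * Gt root par depth hd φ μB y x
        = Ft root par depth hd φ μB x y * Ft root par depth hd φ μB y x /
          (1 - Ft root par depth hd φ μB x y * Ft root par depth hd φ μB y x) := by
      intro y _
      by_cases hFt : Ft root par depth hd φ μB x y = 0
      · rw [pRec, Gt, hFt]; simp
      · have hFy : Ftgen root par depth hd φ μB y x = Ft root par depth hd φ μB y x := by
          rcases Ft_cases root par depth hd φ μB hroot hdepth0 hdepth x y hFt with
            ⟨hpy, hyx⟩ | ⟨hpx, hxy⟩
          · have hnanc : ∀ j, par^[j] x ≠ y :=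
              child_not_anc root par depth hroot hdepth0 hdepth x x y
                (meet_self root par depth hroot hdepth0 hdepth x).1 hpy hyx
                (by intro e' he'
                    rw [(meet_self root par depth hroot hdepth0 hdepth x).2.2] at he'
                    omega)
            rw [Ftgen_child root par depth hd φ μB hroot hdepth0 hdepth x x y hpy hyx hnanc,
              Ftgen_self root par depth hd φ μB hroot hdepth0 hdepth x,
              (Ft_child root par depth hd φ μB hroot hdepth0 hdepth x y hpy hyx).2, mul_one]
          · have hxroot : x ≠ root := by
              intro h; apply hxy; rw [← hpx, h, hroot]
            obtain rfl : y = par x := hpx.symm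
            rw [Ftgen_anc_parent root par depth hd φ μB hroot hdepth0 hdepth x x hxroot
                (meet_self root par depth hroot hdepth0 hdepth x).1,
              Ftgen_self root par depth hd φ μB hroot hdepth0 hdepth x,
              (Ft_parent root par depth hd φ μB hroot hdepth0 hdepth x hxroot).2, mul_one]
        rw [pRec, Gt, hFy]
        have h1q : 1 - Ft root par depth hd φ μB x y * Ft root par depth hd φ μB y x ≠ 0 := by
          have := (hqb y).2; linarith
        field_simp
    rw [Finset.sum_congr rfl hterm, Gt,
      Ftgen_self root par depth hd φ μB hroot hdepth0 hdepth x, one_mul]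
    linarith [hGtd_sum]
  · -- x ≠ x₀
    rw [if_neg hxx]
    obtain ⟨w, hw_mem, hK1, hK2⟩ :
        ∃ w ∈ s, Ftgen root par depth hd φ μB x x₀
            = Ft root par depth hd φ μB x w * Ftgen root par depth hd φ μB w x₀ ∧
          ∀ y, Ft root par depth hd φ μB x y ≠ 0 → y ≠ w →
            Ftgen root par depth hd φ μB y x₀
              = Ft root par depth hd φ μB y x * Ftgen root par depth hd φ μB x x₀ := by
      by_cases hm : meetIdx par x x₀ = 0
      · -- x is a strict ancestor of x₀
        obtain ⟨e, hde⟩ : ∃ e, downIdx par x x₀ = e + 1 := by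
          have hmeet : meet par x x₀ = x := by rw [meet, hm]; rfl
          have hdx := (downIdx_spec root par depth hroot hdepth0 hdepth x x₀).1
          rw [hmeet] at hdx
          rcases Nat.eq_zero_or_pos (downIdx par x x₀) with h0 | hp
          · rw [h0] at hdx; exact absurd hdx.symm hxx
          · exact ⟨_, (Nat.succ_pred_eq_of_pos hp).symm⟩
        obtain ⟨hpw, hwx, -, -, -⟩ :=
          special_child root par depth hroot hdepth0 hdepth x x₀ hm e hde
        refine ⟨par^[e] x₀, ?_, ?_, ?_⟩
        · exact Finset.mem_union_left _ ((hlocfin x).mem_toFinset.mpr ⟨hpw, hwx⟩)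
        · rw [(Ft_child root par depth hd φ μB hroot hdepth0 hdepth x _ hpw hwx).1]
          exact Ftgen_special root par depth hd φ μB hroot hdepth0 hdepth x x₀ hm e hde
        · intro y hFt hyw
          rcases Ft_cases root par depth hd φ μB hroot hdepth0 hdepth x y hFt with
            ⟨hpy, hyx⟩ | ⟨hpx, hxy⟩
          · have hnanc : ∀ j, par^[j] x₀ ≠ y :=
              child_not_anc root par depth hroot hdepth0 hdepth x x₀ y hm hpy hyx
                (by intro e' he'
                    rw [hde] at he'
                    have he : e' = e := by omega
                    rw [he]; exact hyw)
            rw [Ftgen_child root par depth hd φ μB hroot hdepth0 hdepth x x₀ y hpy hyx hnanc,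
              (Ft_child root par depth hd φ μB hroot hdepth0 hdepth x y hpy hyx).2]
          · have hxroot : x ≠ root := by
              intro h; apply hxy; rw [← hpx, h, hroot]
            obtain rfl : y = par x := hpx.symm
            rw [Ftgen_anc_parent root par depth hd φ μB hroot hdepth0 hdepth x x₀ hxroot hm,
              (Ft_parent root par depth hd φ μB hroot hdepth0 hdepth x hxroot).2]
      · -- x is not an ancestor of x₀
        obtain ⟨hxroot, -, -, -⟩ :=
          nonanc_parent root par depth hroot hdepth0 hdepth x x₀ hm
        refine ⟨par x, Finset.mem_union_right _ (Finset.mem_singleton_self _), ?_, ?_⟩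
        · rw [(Ft_parent root par depth hd φ μB hroot hdepth0 hdepth x hxroot).1]
          exact Ftgen_nonanc_parent root par depth hd φ μB hroot hdepth0 hdepth x x₀ hm
        · intro y hFt hyw
          rcases Ft_cases root par depth hd φ μB hroot hdepth0 hdepth x y hFt with
            ⟨hpy, hyx⟩ | ⟨hpx, hxy⟩
          · have hnanc : ∀ j, par^[j] x₀ ≠ y :=
              child_not_anc' root par depth hroot hdepth0 hdepth x x₀ y hm hpy
            rw [Ftgen_child root par depth hd φ μB hroot hdepth0 hdepth x x₀ y hpy hyx hnanc,
              (Ft_child root par depth hd φ μB hroot hdepth0 hdepth x y hpy hyx).2]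
          · exact absurd hpx.symm hyw
    -- split off the term at w
    rw [← Finset.add_sum_erase s _ hw_mem]
    have herase : ∀ y ∈ s.erase w,
        pRec root par depth hd φ μB x y * Gt root par depth hd φ μB y x₀
          = (Ftgen root par depth hd φ μB x x₀ * Gtd root par depth hd φ μB x₀ /
              Gtd root par depth hd φ μB x) *
            (Ft root par depth hd φ μB x y * Ft root par depth hd φ μB y x /
              (1 - Ft root par depth hd φ μB x y * Ft root par depth hd φ μB y x)) := by
      intro y hy
      have hyw : y ≠ w := Finset.ne_of_mem_erase hy
      by_cases hFt : Ft root par depth hd φ μB x y = 0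
      · rw [pRec, Gt, hFt]; simp
      · rw [pRec, Gt, hK2 y hFt hyw]
        have h1q : 1 - Ft root par depth hd φ μB x y * Ft root par depth hd φ μB y x ≠ 0 := by
          have := (hqb y).2; linarith
        field_simp
    rw [Finset.sum_congr rfl herase, ← Finset.mul_sum]
    have hsum_erase : ∑ y ∈ s.erase w,
        (Ft root par depth hd φ μB x y * Ft root par depth hd φ μB y x /
          (1 - Ft root par depth hd φ μB x y * Ft root par depth hd φ μB y x))
        = (Gtd root par depth hd φ μB x - 1) -
            Ft root par depth hd φ μB x w * Ft root par depth hd φ μB w x /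
              (1 - Ft root par depth hd φ μB x w * Ft root par depth hd φ μB w x) := by
      rw [Finset.sum_erase_eq_sub hw_mem]
      have := hGtd_sum
      linarith
    rw [hsum_erase, pRec, Gt, Gt, hK1]
    have h1qw : 1 - Ft root par depth hd φ μB x w * Ft root par depth hd φ μB w x ≠ 0 := by
      have := (hqb w).2; linarith
    field_simp
    ring
end
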